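/- arXiv:1709.07021 — 7 statements merged into one kernel-verified Lean document; each statement's English description precedes it below -/
import Mathlib

section
/- In the Coxeter group W of type A_n (isomorphic to the symmetric group S_{n+1}), the number of elements w in W that admit exactly one reduced word is n^2 + 1. -/
/-- The Coxeter system of type `Aₙ` (with `n` generators, indexed by `Fin n`). -/
noncomputable def csA (n : ℕ) :
    CoxeterSystem (CoxeterMatrix.Aₙ n) (CoxeterMatrix.Aₙ n).Group :=
  (CoxeterMatrix.Aₙ n).toCoxeterSystem

theorem Equiv.Perm.inv_apply_self {α : Type*} (f : Equiv.Perm α) (x : α) : f⁻¹ (f x) = x :=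
  Equiv.Perm.inv_eq_iff_eq.mpr rfl

theorem Equiv.Perm.apply_inv_self {α : Type*} (f : Equiv.Perm α) (x : α) : f (f⁻¹ x) = x :=
  (Equiv.eq_symm_apply f).mp rfl

namespace UniqueRW
open CoxeterSystem List

variable {n : ℕ}

abbrev W (n : ℕ) := (CoxeterMatrix.Aₙ n).Group

def tr (i : Fin n) : Equiv.Perm (Fin (n+1)) := Equiv.swap i.castSucc i.succ

lemma An_apply (i j : Fin n) : (CoxeterMatrix.Aₙ n) i j =
    if i = j then 1 else (if (j : ℕ) + 1 = i ∨ (i : ℕ) + 1 = j then 3 else 2) := rfl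

lemma swap_val {N : ℕ} (a b y : Fin N) : ((Equiv.swap a b) y).val =
    if y.val = a.val then b.val else if y.val = b.val then a.val else y.val := by
  simp only [Equiv.swap_apply_def, Fin.ext_iff]
  split_ifs <;> simp_all <;> omega

lemma tr_val (i : Fin n) (y : Fin (n+1)) : ((tr i) y).val =
    if y.val = i.val then i.val + 1 else if y.val = i.val + 1 then i.val else y.val := by
  rw [tr, swap_val]
  simp

lemma tr_rel (i : Fin n) (y : Fin (n+1)) :
    ((tr i) y).val = i.val + 1 ∧ y.val = i.val
    ∨ ((tr i) y).val = i.val ∧ y.val = i.val + 1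
    ∨ ((tr i) y).val = y.val ∧ y.val ≠ i.val ∧ y.val ≠ i.val + 1 := by
  rw [tr_val]; split_ifs <;> simp_all

lemma ord3 (i j : Fin n) (hadj : (j:ℕ)+1 = i ∨ (i:ℕ)+1 = j) : (tr i * tr j)^3 = 1 := by
  ext x
  simp only [pow_succ, pow_zero, one_mul, Equiv.Perm.mul_apply, Equiv.Perm.one_apply]
  have h1 := tr_rel j x
  have h2 := tr_rel i ((tr j) x)
  have h3 := tr_rel j ((tr i) ((tr j) x))
  have h4 := tr_rel i ((tr j) ((tr i) ((tr j) x)))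
  have h5 := tr_rel j ((tr i) ((tr j) ((tr i) ((tr j) x))))
  have h6 := tr_rel i ((tr j) ((tr i) ((tr j) ((tr i) ((tr j) x)))))
  omega

lemma ord2 (i j : Fin n) (hne : i ≠ j) (hfar : ¬((j:ℕ)+1 = i ∨ (i:ℕ)+1 = j)) :
    (tr i * tr j)^2 = 1 := by
  have hne' : (i : ℕ) ≠ j := fun h => hne (Fin.ext h)
  push_neg at hfar
  ext x
  simp only [pow_succ, pow_zero, one_mul, Equiv.Perm.mul_apply, Equiv.Perm.one_apply]
  have h1 := tr_rel j x
  have h2 := tr_rel i ((tr j) x)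
  have h3 := tr_rel j ((tr i) ((tr j) x))
  have h4 := tr_rel i ((tr j) ((tr i) ((tr j) x)))
  omega

lemma liftable : CoxeterMatrix.IsLiftable (CoxeterMatrix.Aₙ n) (tr (n := n)) := by
  intro i j
  rw [An_apply]
  split_ifs with h1 h2
  · subst h1
    simp [tr, pow_one, Equiv.swap_mul_self]
  · exact ord3 i j h2
  · exact ord2 i j h1 h2

/-- The permutation representation. -/
noncomputable def φ : W n →* Equiv.Perm (Fin (n+1)) :=
  (csA n).lift ⟨tr, liftable⟩

lemma φ_simple (i : Fin n) : φ ((csA n).simple i) = tr i :=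
  (csA n).lift_apply_simple liftable i

/-- Inversion number of a permutation of `Fin (n+1)`. -/
def inversions (σ : Equiv.Perm (Fin (n+1))) : Finset (Fin (n+1) × Fin (n+1)) :=
  Finset.univ.filter (fun p => p.1 < p.2 ∧ σ p.2 < σ p.1)

def inv (σ : Equiv.Perm (Fin (n+1))) : ℕ := (inversions σ).card

lemma inv_one : inv (1 : Equiv.Perm (Fin (n+1))) = 0 := by
  rw [inv, inversions]
  convert Finset.card_empty
  ext p
  rw [Finset.mem_filter]
  simp only [Finset.mem_filter_univ, Finset.mem_filter, Finset.mem_univ, true_and, Finset.notMem_empty, iff_false,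
    Equiv.Perm.one_apply]
  rintro ⟨h1, h2⟩
  exact absurd (h1.trans h2) (lt_irrefl _)

lemma tr_lt_tr_iff {k : Fin n} {u v : Fin (n+1)} (hne : u ≠ v)
    (h1 : ¬(u = k.castSucc ∧ v = k.succ)) (h2 : ¬(u = k.succ ∧ v = k.castSucc)) :
    ((tr k) u < (tr k) v ↔ u < v) := by
  have hu := tr_rel k u
  have hv := tr_rel k v
  have hne' : u.val ≠ v.val := fun h => hne (Fin.ext h)
  simp only [Fin.ext_iff, Fin.coe_castSucc, Fin.val_succ, not_and] at h1 h2
  rw [Fin.lt_def, Fin.lt_def]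
  omega

lemma inv_swap_mul {σ : Equiv.Perm (Fin (n+1))} {k : Fin n}
    (h : σ⁻¹ k.castSucc < σ⁻¹ k.succ) :
    inv (tr k * σ) = inv σ + 1 := by
  have hab : k.castSucc < k.succ := by rw [Fin.lt_def]; simp
  have key : inversions (tr k * σ) = insert (σ⁻¹ k.castSucc, σ⁻¹ k.succ) (inversions σ) := by
    ext p
    obtain ⟨p1, p2⟩ := p
    simp only [inversions]
    rw [Finset.mem_insert, Finset.mem_filter, Finset.mem_filter]
    simp only [inversions, Finset.mem_insert, Finset.mem_filter_univ, Finset.mem_filter, Finset.mem_univ, true_and,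
      Prod.mk.injEq, Equiv.Perm.mul_apply]
    constructor
    · rintro ⟨hlt, hv⟩
      by_cases hpq : p1 = σ⁻¹ k.castSucc ∧ p2 = σ⁻¹ k.succ
      · exact Or.inl hpq
      · refine Or.inr ⟨hlt, ?_⟩
        rw [← tr_lt_tr_iff (σ.injective.ne (ne_of_gt hlt))
          ?_ ?_]
        · exact hv
        · rintro ⟨ha, hb⟩
          have hp2 : p2 = σ⁻¹ k.castSucc := by rw [← ha, Equiv.Perm.inv_apply_self]
          have hp1 : p1 = σ⁻¹ k.succ := by rw [← hb, Equiv.Perm.inv_apply_self]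
          rw [hp1, hp2] at hlt
          exact absurd (h.trans hlt) (lt_irrefl _)
        · rintro ⟨ha, hb⟩
          exact hpq ⟨by rw [← hb, Equiv.Perm.inv_apply_self], by rw [← ha, Equiv.Perm.inv_apply_self]⟩
    · rintro (⟨h1, h2⟩ | ⟨hlt, hv⟩)
      · subst h1; subst h2
        refine ⟨h, ?_⟩
        rw [Equiv.Perm.apply_inv_self, Equiv.Perm.apply_inv_self]
        have := tr_rel k k.castSucc
        have := tr_rel k k.succ
        rw [Fin.lt_def]
        simp only [Fin.coe_castSucc, Fin.val_succ] at *
        omega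
      · refine ⟨hlt, ?_⟩
        rw [tr_lt_tr_iff (ne_of_lt hv) ?_ ?_]
        · exact hv
        · rintro ⟨ha, hb⟩
          have hp2 : p2 = σ⁻¹ k.castSucc := by rw [← ha, Equiv.Perm.inv_apply_self]
          have hp1 : p1 = σ⁻¹ k.succ := by rw [← hb, Equiv.Perm.inv_apply_self]
          rw [hp1, hp2] at hlt
          exact absurd (h.trans hlt) (lt_irrefl _)
        · rintro ⟨ha, hb⟩
          rw [ha, hb] at hv
          exact absurd (hv.trans hab) (lt_irrefl _)
  rw [inv, inv, key, Finset.card_insert_of_notMem]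
  intro hmem
  simp only [inversions, Finset.mem_filter_univ, Finset.mem_filter, Finset.mem_univ, true_and,
    Equiv.Perm.apply_inv_self] at hmem
  exact absurd (hab.trans hmem.2) (lt_irrefl _)

lemma inv_swap_mul_le (σ : Equiv.Perm (Fin (n+1))) (k : Fin n) :
    inv (tr k * σ) ≤ inv σ + 1 := by
  rcases lt_or_gt_of_ne (a := σ⁻¹ k.castSucc) (b := σ⁻¹ k.succ)
    (σ⁻¹.injective.ne (by rw [Fin.ne_iff_vne]; simp)) with hlt | hgt
  · exact le_of_eq (inv_swap_mul hlt)
  · have h2 : (tr k * σ)⁻¹ k.castSucc < (tr k * σ)⁻¹ k.succ := by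
      simp only [mul_inv_rev, Equiv.Perm.mul_apply]
      have e1 : (tr k)⁻¹ k.castSucc = k.succ := by
        rw [tr, Equiv.swap_inv, Equiv.swap_apply_left]
      have e2 : (tr k)⁻¹ k.succ = k.castSucc := by
        rw [tr, Equiv.swap_inv, Equiv.swap_apply_right]
      rw [e1, e2]
      exact hgt
    have := inv_swap_mul h2
    have htt : tr k * (tr k * σ) = σ := by
      rw [← mul_assoc, tr, Equiv.swap_mul_self, one_mul]
    rw [htt] at this
    omega

/-! ### Ascending run words -/

def ascWord (i m : ℕ) (h : i + m < n) : List (Fin n) :=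
  List.ofFn (fun t : Fin (m+1) => ⟨i + t, by omega⟩)

lemma ascWord_length {i m : ℕ} (h : i + m < n) : (ascWord i m h).length = m + 1 := by
  simp [ascWord]

lemma ascWord_zero {i : ℕ} (h : i + 0 < n) : ascWord i 0 h = [⟨i, by omega⟩] := by
  simp [ascWord, List.ofFn_succ]

lemma ascWord_succ {i m : ℕ} (h : i + (m+1) < n) :
    ascWord i (m+1) h = ⟨i, by omega⟩ :: ascWord (i+1) m (by omega) := by
  rw [ascWord, List.ofFn_succ]
  congr 1
  rw [ascWord]
  congr 1
  funext t
  apply Fin.ext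
  simp
  omega

noncomputable def wA (i m : ℕ) (h : i + m < n) : W n := (csA n).wordProd (ascWord i m h)

lemma wA_zero {i : ℕ} (h : i + 0 < n) : wA i 0 h = (csA n).simple ⟨i, by omega⟩ := by
  rw [wA, ascWord_zero, CoxeterSystem.wordProd_singleton]

lemma wA_succ {i m : ℕ} (h : i + (m+1) < n) :
    wA i (m+1) h = (csA n).simple ⟨i, by omega⟩ * wA (i+1) m (by omega) := by
  rw [wA, ascWord_succ, CoxeterSystem.wordProd_cons, wA]

lemma asc_val (m : ℕ) : ∀ (i : ℕ) (h : i + m < n) (x : Fin (n+1)),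
    ((φ (wA i m h)) x).val =
      if x.val = i + m + 1 then i
      else if i ≤ x.val ∧ x.val ≤ i + m then x.val + 1 else x.val := by
  induction m with
  | zero =>
    intro i h x
    rw [wA_zero, φ_simple, tr_val]
    simp only []
    split_ifs <;> omega
  | succ m ih =>
    intro i h x
    rw [wA_succ, map_mul, φ_simple, Equiv.Perm.mul_apply, tr_val]
    have hx := ih (i+1) (by omega) x
    simp only [] at hx ⊢
    split_ifs at hx with h1 h2 <;> rw [hx] <;> split_ifs <;> omega

lemma wA_inv_val {i m : ℕ} (h : i + m < n) (y : Fin (n+1)) :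
    ((φ (wA i m h))⁻¹ y).val =
      if y.val = i then i + m + 1
      else if i + 1 ≤ y.val ∧ y.val ≤ i + m + 1 then y.val - 1 else y.val := by
  have hb : (if y.val = i then i + m + 1
      else if i + 1 ≤ y.val ∧ y.val ≤ i + m + 1 then y.val - 1 else y.val) < n + 1 := by
    split_ifs <;> omega
  have hg : (φ (wA i m h)) ⟨_, hb⟩ = y := by
    apply Fin.ext
    rw [asc_val]
    simp only []
    split_ifs <;> omega
  conv_lhs => rw [← hg, Equiv.Perm.inv_apply_self]

lemma inv_φ_wA (m : ℕ) : ∀ (i : ℕ) (h : i + m < n), inv (φ (wA i m h)) = m + 1 := by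
  induction m with
  | zero =>
    intro i h
    rw [wA_zero, φ_simple]
    have hlt : ((1 : Equiv.Perm (Fin (n+1))))⁻¹ (⟨i, by omega⟩ : Fin n).castSucc <
        (1 : Equiv.Perm (Fin (n+1)))⁻¹ (⟨i, by omega⟩ : Fin n).succ := by
      simp [Fin.lt_def]
    have : tr (⟨i, by omega⟩ : Fin n) = tr ⟨i, by omega⟩ * 1 := by rw [mul_one]
    rw [this, inv_swap_mul hlt, inv_one]
  | succ m ih =>
    intro i h
    rw [wA_succ, map_mul, φ_simple]
    have hlt : (φ (wA (i+1) m (by omega)))⁻¹ (⟨i, by omega⟩ : Fin n).castSucc <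
        (φ (wA (i+1) m (by omega)))⁻¹ (⟨i, by omega⟩ : Fin n).succ := by
      rw [Fin.lt_def, wA_inv_val, wA_inv_val]
      simp only [Fin.coe_castSucc, Fin.val_succ]
      split_ifs <;> omega
    rw [inv_swap_mul hlt, ih (i+1) (by omega)]

lemma inv_wordProd_le (ω : List (Fin n)) : inv (φ ((csA n).wordProd ω)) ≤ ω.length := by
  induction ω with
  | nil => simp [inv_one]
  | cons k t ih =>
    rw [CoxeterSystem.wordProd_cons, map_mul, φ_simple, List.length_cons]
    calc inv (tr k * φ ((csA n).wordProd t)) ≤ inv (φ ((csA n).wordProd t)) + 1 :=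
          inv_swap_mul_le _ _
      _ ≤ t.length + 1 := by omega

lemma inv_le_length (w : W n) : inv (φ w) ≤ (csA n).length w := by
  obtain ⟨ω, hlen, hw⟩ := (csA n).exists_reduced_word w
  have := inv_wordProd_le ω
  rw [← hw] at this
  rw [CoxeterSystem.IsReduced, ← hw] at hlen
  omega

lemma ascWord_reduced {i m : ℕ} (h : i + m < n) : (csA n).IsReduced (ascWord i m h) := by
  rw [CoxeterSystem.IsReduced, ascWord_length]
  refine le_antisymm (le_trans ((csA n).length_wordProd_le _) (by rw [ascWord_length])) ?_
  calc m + 1 = inv (φ (wA i m h)) := (inv_φ_wA _ _ h).symm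
    _ ≤ (csA n).length (wA i m h) := inv_le_length _
    _ = (csA n).length ((csA n).wordProd (ascWord i m h)) := rfl

lemma length_wA {i m : ℕ} (h : i + m < n) : (csA n).length (wA i m h) = m + 1 := by
  have := ascWord_reduced h
  rw [CoxeterSystem.IsReduced, ascWord_length] at this
  exact this

lemma length_simple_mul_wA {i m : ℕ} {k : Fin n} (h : i + m < n) (hk : (k : ℕ) ≠ i) :
    m + 2 ≤ (csA n).length ((csA n).simple k * wA i m h) := by
  have hlt : (φ (wA i m h))⁻¹ k.castSucc < (φ (wA i m h))⁻¹ k.succ := by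
    rw [Fin.lt_def, wA_inv_val h, wA_inv_val h]
    simp only [Fin.coe_castSucc, Fin.val_succ]
    have := k.isLt
    split_ifs <;> omega
  calc m + 2 = inv (φ ((csA n).simple k * wA i m h)) := by
        rw [map_mul, φ_simple, inv_swap_mul hlt, inv_φ_wA _ _ h]
    _ ≤ _ := inv_le_length _

lemma asc_unique : ∀ (m i : ℕ) (h : i + m < n) (ω : List (Fin n)),
    (csA n).IsReduced ω → (csA n).wordProd ω = wA i m h → ω = ascWord i m h := by
  intro m
  induction m with
  | zero =>
    intro i h ω hred hw
    cases ω with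
    | nil =>
      exfalso
      have := length_wA h
      rw [← hw] at this
      simp at this
    | cons k t =>
      have hlen : t.length = 0 := by
        have h1 : (csA n).length ((csA n).wordProd (k :: t)) = t.length + 1 := by
          rw [hred]; simp
        rw [hw, length_wA h] at h1
        omega
      have hki : (k : ℕ) = i := by
        by_contra hki
        have h2 := length_simple_mul_wA h hki
        have h3 : (csA n).simple k * wA i 0 h = (csA n).wordProd t := by
          rw [← hw, CoxeterSystem.wordProd_cons, CoxeterSystem.simple_mul_simple_cancel_left]
        rw [h3] at h2
        have := (csA n).length_wordProd_le t
        omega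
      have ht : t = [] := List.length_eq_zero_iff.mp hlen
      rw [ht, ascWord_zero]
      exact congrArg₂ List.cons (Fin.ext hki) rfl
  | succ m ih =>
    intro i h ω hred hw
    cases ω with
    | nil =>
      exfalso
      have := length_wA h
      rw [← hw] at this
      simp at this
    | cons k t =>
      have hlen : t.length = m + 1 := by
        have h1 : (csA n).length ((csA n).wordProd (k :: t)) = t.length + 1 := by
          rw [hred]; simp
        rw [hw, length_wA h] at h1
        omega
      have hki : (k : ℕ) = i := by
        by_contra hki
        have h2 := length_simple_mul_wA h hki
        have h3 : (csA n).simple k * wA i (m+1) h = (csA n).wordProd t := by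
          rw [← hw, CoxeterSystem.wordProd_cons, CoxeterSystem.simple_mul_simple_cancel_left]
        rw [h3] at h2
        have := (csA n).length_wordProd_le t
        omega
      have hk : k = (⟨i, by omega⟩ : Fin n) := Fin.ext hki
      have h3 : (csA n).simple k * wA i (m+1) h = (csA n).wordProd t := by
        rw [← hw, CoxeterSystem.wordProd_cons, CoxeterSystem.simple_mul_simple_cancel_left]
      rw [hk] at h3
      have hπt : (csA n).wordProd t = wA (i+1) m (by omega) := by
        rw [← h3, wA_succ, CoxeterSystem.simple_mul_simple_cancel_left]
      have htred : (csA n).IsReduced t := by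
        rw [CoxeterSystem.IsReduced, hπt, length_wA, hlen]
      rw [ascWord_succ h]
      exact congrArg₂ List.cons (Fin.ext hki) (ih (i+1) (by omega) t htred hπt)

/-! ### Braid and commutation moves -/

lemma M_adj {a b : Fin n} (hadj : (b:ℕ)+1 = a ∨ (a:ℕ)+1 = b) :
    (CoxeterMatrix.Aₙ n) a b = 3 := by
  rw [An_apply, if_neg, if_pos hadj]
  rintro rfl
  omega

lemma M_far {a b : Fin n} (hne : a ≠ b) (hfar : ¬((b:ℕ)+1 = a ∨ (a:ℕ)+1 = b)) :
    (CoxeterMatrix.Aₙ n) a b = 2 := by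
  rw [An_apply, if_neg hne, if_neg hfar]

lemma braid_rel {a b : Fin n} (hadj : (b:ℕ)+1 = a ∨ (a:ℕ)+1 = b) :
    (csA n).simple a * (csA n).simple b * (csA n).simple a =
    (csA n).simple b * (csA n).simple a * (csA n).simple b := by
  have h3 : ((csA n).simple a * (csA n).simple b) ^ 3 = 1 := by
    have := (csA n).simple_mul_simple_pow a b
    rwa [M_adj hadj] at this
  rw [pow_succ, pow_two] at h3
  calc (csA n).simple a * (csA n).simple b * (csA n).simple a
      = ((csA n).simple b * (csA n).simple a * (csA n).simple b)⁻¹ :=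
        eq_inv_of_mul_eq_one_left (by simpa only [mul_assoc] using h3)
    _ = _ := by
        simp only [mul_inv_rev, CoxeterSystem.inv_simple, mul_assoc]

lemma comm_rel {a b : Fin n} (hne : a ≠ b) (hfar : ¬((b:ℕ)+1 = a ∨ (a:ℕ)+1 = b)) :
    (csA n).simple a * (csA n).simple b = (csA n).simple b * (csA n).simple a := by
  have h2 : ((csA n).simple a * (csA n).simple b) ^ 2 = 1 := by
    have := (csA n).simple_mul_simple_pow a b
    rwa [M_far hne hfar] at this
  rw [pow_two] at h2
  calc (csA n).simple a * (csA n).simple b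
      = ((csA n).simple a * (csA n).simple b)⁻¹ := eq_inv_of_mul_eq_one_left h2
    _ = _ := by simp only [mul_inv_rev, CoxeterSystem.inv_simple, mul_assoc]


/-! ### Dichotomy for unique reduced words -/

lemma ascWord_head {i m : ℕ} (h : i + m < n) :
    (ascWord i m h).head? = some ⟨i, by omega⟩ := by
  cases m with
  | zero => rw [ascWord_zero]; rfl
  | succ m => rw [ascWord_succ]; rfl

lemma chain_dichotomy : ∀ (ω : List (Fin n)),
    (∀ (u : List (Fin n)) (a b : Fin n) (v : List (Fin n)), ω = u ++ a :: b :: v →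
      ((b:ℕ) = (a:ℕ)+1 ∨ (a:ℕ) = (b:ℕ)+1)) →
    (∀ (u : List (Fin n)) (a b : Fin n) (v : List (Fin n)), ω = u ++ a :: b :: a :: v → False) →
    List.Chain' (fun a b : Fin n => (b:ℕ) = (a:ℕ)+1) ω ∨
    List.Chain' (fun a b : Fin n => (a:ℕ) = (b:ℕ)+1) ω := by
  intro ω
  induction ω with
  | nil => intro _ _; left; exact List.isChain_nil
  | cons a t ih =>
    intro H1 H2
    cases t with
    | nil => left; exact List.isChain_singleton _
    | cons b t' =>
      have hstep := H1 [] a b t' rfl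
      have ihres := ih (fun u x y v h => H1 (a::u) x y v (by rw [h, List.cons_append]))
        (fun u x y v h => H2 (a::u) x y v (by rw [h, List.cons_append]))
      rcases hstep with h1 | h2
      · left
        rw [List.Chain', List.isChain_cons_cons]
        refine ⟨h1, ?_⟩
        rcases ihres with hup | hdown
        · exact hup
        · cases t' with
          | nil => exact List.isChain_singleton _
          | cons c t'' =>
            exfalso
            rw [List.Chain', List.isChain_cons_cons] at hdown
            have hbc : (b:ℕ) = (c:ℕ) + 1 := hdown.1
            have hca : c = a := Fin.ext (by omega)
            exact H2 [] a b t'' (by simp [hca])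
      · right
        rw [List.Chain', List.isChain_cons_cons]
        refine ⟨h2, ?_⟩
        rcases ihres with hup | hdown
        · cases t' with
          | nil => exact List.isChain_singleton _
          | cons c t'' =>
            exfalso
            rw [List.Chain', List.isChain_cons_cons] at hup
            have hbc : (c:ℕ) = (b:ℕ) + 1 := hup.1
            have hca : c = a := Fin.ext (by omega)
            exact H2 [] a b t'' (by simp [hca])
        · exact hdown

lemma chainup_spec : ∀ (ω : List (Fin n)),
    List.Chain' (fun a b : Fin n => (b:ℕ) = (a:ℕ)+1) ω →
    ω = [] ∨ ∃ (i m : ℕ) (h : i + m < n), ω = ascWord i m h := by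
  intro ω
  induction ω with
  | nil => intro _; left; rfl
  | cons a t ih =>
    intro hc
    right
    cases t with
    | nil =>
      refine ⟨a.val, 0, by simpa using a.isLt, ?_⟩
      rw [ascWord_zero]
    | cons b t' =>
      rw [List.Chain', List.isChain_cons_cons] at hc
      obtain ⟨hab, hc'⟩ := hc
      rcases ih hc' with h0 | ⟨i, m, h, heq⟩
      · exact absurd h0 (by simp)
      · have hb : (b : ℕ) = i := by
          have h5 := congrArg List.head? heq
          rw [ascWord_head] at h5
          simp only [List.head?_cons, Option.some.injEq] at h5
          exact congrArg Fin.val h5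
        have hi : i = (a:ℕ) + 1 := by omega
        subst hi
        refine ⟨a.val, m + 1, by omega, ?_⟩
        rw [ascWord_succ]
        exact congrArg₂ List.cons (Fin.ext rfl) heq

lemma isReduced_nil : (csA n).IsReduced ([] : List (Fin n)) := by
  simp [CoxeterSystem.IsReduced]

lemma one_exu : ∃! ω : List (Fin n), (csA n).IsReduced ω ∧ (csA n).wordProd ω = 1 := by
  refine ⟨[], ⟨isReduced_nil, by simp⟩, ?_⟩
  rintro ω ⟨h1, h2⟩
  rw [CoxeterSystem.IsReduced, h2] at h1
  simp only [CoxeterSystem.length_one] at h1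
  exact List.length_eq_zero_iff.mp h1.symm

lemma wA_exu {i m : ℕ} (h : i + m < n) :
    ∃! ω : List (Fin n), (csA n).IsReduced ω ∧ (csA n).wordProd ω = wA i m h := by
  refine ⟨ascWord i m h, ⟨ascWord_reduced h, rfl⟩, ?_⟩
  rintro ω ⟨h1, h2⟩
  exact asc_unique m i h ω h1 h2

lemma wA_inv_exu {i m : ℕ} (h : i + m < n) :
    ∃! ω : List (Fin n), (csA n).IsReduced ω ∧ (csA n).wordProd ω = (wA i m h)⁻¹ := by
  refine ⟨(ascWord i m h).reverse, ⟨((csA n).isReduced_reverse_iff _).mpr (ascWord_reduced h),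
    by rw [CoxeterSystem.wordProd_reverse, wA]⟩, ?_⟩
  rintro ω ⟨h1, h2⟩
  have h3 : (csA n).wordProd ω.reverse = wA i m h := by
    rw [CoxeterSystem.wordProd_reverse, h2, inv_inv]
  have h4 := asc_unique m i h ω.reverse (((csA n).isReduced_reverse_iff _).mpr h1) h3
  rw [← List.reverse_reverse ω, h4]

lemma unique_shape {w : W n}
    (hu : ∃! ω : List (Fin n), (csA n).IsReduced ω ∧ (csA n).wordProd ω = w) :
    w = 1 ∨ ∃ (i m : ℕ) (h : i + m < n), w = wA i m h ∨ w = (wA i m h)⁻¹ := by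
  obtain ⟨ω, ⟨hred, hπ⟩, huniq⟩ := hu
  have hne2 : ∀ (u : List (Fin n)) (a : Fin n) (v : List (Fin n)), ω ≠ u ++ a :: a :: v := by
    intro u a v heq
    have hπ2 : (csA n).wordProd ω = (csA n).wordProd (u ++ v) := by
      rw [heq, CoxeterSystem.wordProd_append, CoxeterSystem.wordProd_cons,
        CoxeterSystem.wordProd_cons, CoxeterSystem.simple_mul_simple_cancel_left,
        ← CoxeterSystem.wordProd_append]
    have hl2 := (csA n).length_wordProd_le (u ++ v)
    rw [← hπ2, hred] at hl2
    have hlen := congrArg List.length heq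
    simp only [List.length_append, List.length_cons] at hlen
    simp only [List.length_append] at hl2
    omega
  have H1 : ∀ (u : List (Fin n)) (a b : Fin n) (v : List (Fin n)), ω = u ++ a :: b :: v →
      ((b:ℕ) = (a:ℕ)+1 ∨ (a:ℕ) = (b:ℕ)+1) := by
    intro u a b v heq
    by_contra hcon
    push_neg at hcon
    have hne : a ≠ b := by
      rintro rfl
      exact hne2 u a v heq
    have hnev : (a:ℕ) ≠ (b:ℕ) := fun hh => hne (Fin.ext hh)
    have hfar : ¬(((b:ℕ)+1 = (a:ℕ)) ∨ ((a:ℕ)+1 = (b:ℕ))) := by omega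
    have hcomm := comm_rel hne hfar
    have hπ2 : (csA n).wordProd (u ++ b :: a :: v) = (csA n).wordProd ω := by
      rw [heq]
      simp only [CoxeterSystem.wordProd_append, CoxeterSystem.wordProd_cons]
      congr 1
      rw [← mul_assoc, ← mul_assoc, hcomm]
    have hred2 : (csA n).IsReduced (u ++ b :: a :: v) := by
      rw [CoxeterSystem.IsReduced, hπ2, hred, heq]
      simp
    have heq2 := huniq (u ++ b :: a :: v) ⟨hred2, by rw [hπ2, hπ]⟩
    rw [heq] at heq2
    have := List.append_cancel_left heq2
    simp only [List.cons.injEq] at this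
    exact hne this.1.symm
  have H2 : ∀ (u : List (Fin n)) (a b : Fin n) (v : List (Fin n)),
      ω = u ++ a :: b :: a :: v → False := by
    intro u a b v heq
    have hadj' := H1 u a b (a :: v) heq
    have hne : a ≠ b := by
      rintro rfl
      exact hne2 u a (a :: v) heq
    have hnev : (a:ℕ) ≠ (b:ℕ) := fun hh => hne (Fin.ext hh)
    have hadj : ((b:ℕ)+1 = (a:ℕ)) ∨ ((a:ℕ)+1 = (b:ℕ)) := by omega
    have hbr := braid_rel hadj
    have hπ2 : (csA n).wordProd (u ++ b :: a :: b :: v) = (csA n).wordProd ω := by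
      rw [heq]
      simp only [CoxeterSystem.wordProd_append, CoxeterSystem.wordProd_cons]
      congr 1
      rw [← mul_assoc, ← mul_assoc, ← mul_assoc, ← mul_assoc, hbr]
    have hred2 : (csA n).IsReduced (u ++ b :: a :: b :: v) := by
      rw [CoxeterSystem.IsReduced, hπ2, hred, heq]
      simp
    have heq2 := huniq (u ++ b :: a :: b :: v) ⟨hred2, by rw [hπ2, hπ]⟩
    rw [heq] at heq2
    have := List.append_cancel_left heq2
    simp only [List.cons.injEq] at this
    exact hne this.1.symm
  rcases chain_dichotomy ω H1 H2 with hup | hdown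
  · rcases chainup_spec ω hup with h0 | ⟨i, m, h, heq⟩
    · left
      rw [← hπ, h0, CoxeterSystem.wordProd_nil]
    · right
      exact ⟨i, m, h, Or.inl (by rw [← hπ, heq]; rfl)⟩
  · have hrev : List.Chain' (fun a b : Fin n => (b:ℕ) = (a:ℕ)+1) ω.reverse := by
      rw [List.Chain', List.isChain_reverse]
      exact hdown
    rcases chainup_spec ω.reverse hrev with h0 | ⟨i, m, h, heq⟩
    · left
      rw [← hπ, List.reverse_eq_nil_iff.mp h0, CoxeterSystem.wordProd_nil]
    · right
      refine ⟨i, m, h, Or.inr ?_⟩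
      rw [← hπ, ← List.reverse_reverse ω, heq, CoxeterSystem.wordProd_reverse]
      rfl


/-! ### Counting -/

noncomputable def f (n : ℕ) (p : ℕ × ℕ) : W n :=
  if h : p.1 ≤ p.2 ∧ p.2 < n then wA p.1 (p.2 - p.1) (by omega)
  else if h2 : p.2 < p.1 ∧ p.1 < n then (wA p.2 (p.1 - p.2) (by omega))⁻¹
  else 1

lemma wA_congr {i m m' : ℕ} (h : i + m < n) (h' : i + m' < n) (e : m = m') :
    wA i m h = wA i m' h' := by subst e; rfl

lemma f_eq_le {i j : ℕ} (hij : i ≤ j) (hj : j < n) :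
    f n (i, j) = wA i (j - i) (by omega) := by
  rw [f, dif_pos (show (i,j).1 ≤ (i,j).2 ∧ (i,j).2 < n from ⟨hij, hj⟩)]

lemma f_eq_gt {i j : ℕ} (hij : j < i) (hi : i < n) :
    f n (i, j) = (wA j (i - j) (by omega))⁻¹ := by
  rw [f, dif_neg (by rintro ⟨h1, _⟩; omega),
    dif_pos (show (i,j).2 < (i,j).1 ∧ (i,j).1 < n from ⟨hij, hi⟩)]

lemma wA_ne_one {i m : ℕ} (h : i + m < n) : wA i m h ≠ 1 := by
  intro he
  have hl := length_wA h
  rw [he, CoxeterSystem.length_one] at hl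
  omega

lemma f_exu {i j : ℕ} (hi : i < n) (hj : j < n) :
    ∃! ω : List (Fin n), (csA n).IsReduced ω ∧ (csA n).wordProd ω = f n (i, j) := by
  rcases le_or_gt i j with hij | hij
  · rw [f_eq_le hij hj]
    exact wA_exu _
  · rw [f_eq_gt hij hi]
    exact wA_inv_exu _

lemma f_ne_one {i j : ℕ} (hi : i < n) (hj : j < n) : f n (i, j) ≠ 1 := by
  rcases le_or_gt i j with hij | hij
  · rw [f_eq_le hij hj]
    exact wA_ne_one _
  · rw [f_eq_gt hij hi]
    simp only [ne_eq, inv_eq_one]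
    exact wA_ne_one _

lemma wA_inj {i m i' m' : ℕ} (h : i + m < n) (h' : i' + m' < n)
    (he : wA i m h = wA i' m' h') : i = i' ∧ m = m' := by
  obtain ⟨x1, hx1⟩ : ∃ x : Fin (n+1), (x:ℕ) = i := ⟨⟨i, by omega⟩, rfl⟩
  obtain ⟨x2, hx2⟩ : ∃ x : Fin (n+1), (x:ℕ) = i + m + 1 := ⟨⟨i + m + 1, by omega⟩, rfl⟩
  have w1 : ((φ (wA i m h)) x1).val = ((φ (wA i' m' h')) x1).val := by rw [he]
  have w2 : ((φ (wA i m h)) x2).val = ((φ (wA i' m' h')) x2).val := by rw [he]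
  have A := asc_val m i h x1
  have B := asc_val m' i' h' x1
  have C := asc_val m i h x2
  have D := asc_val m' i' h' x2
  split_ifs at A B C D <;> omega

lemma wA_ne_inv {i m i' m' : ℕ} (h : i + m < n) (h' : i' + m' < n) (hm' : 1 ≤ m') :
    wA i m h ≠ (wA i' m' h')⁻¹ := by
  intro he
  obtain ⟨x1, hx1⟩ : ∃ x : Fin (n+1), (x:ℕ) = i := ⟨⟨i, by omega⟩, rfl⟩
  have w1 : ((φ (wA i m h)) x1).val = ((φ (wA i' m' h'))⁻¹ x1).val := by rw [he, map_inv]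
  have A := asc_val m i h x1
  have B := wA_inv_val h' x1
  split_ifs at A B <;> omega

lemma f_inj {i j i' j' : ℕ} (hi : i < n) (hj : j < n) (hi' : i' < n) (hj' : j' < n)
    (he : f n (i, j) = f n (i', j')) : i = i' ∧ j = j' := by
  rcases le_or_gt i j with hij | hij <;> rcases le_or_gt i' j' with hij' | hij'
  · rw [f_eq_le hij hj, f_eq_le hij' hj'] at he
    have := wA_inj _ _ he
    omega
  · rw [f_eq_le hij hj, f_eq_gt hij' hi'] at he
    exact absurd he (wA_ne_inv _ _ (by omega))
  · rw [f_eq_gt hij hi, f_eq_le hij' hj'] at he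
    exact absurd he.symm (wA_ne_inv _ _ (by omega))
  · rw [f_eq_gt hij hi, f_eq_gt hij' hi'] at he
    have := wA_inj _ _ (inv_inj.mp he)
    omega

lemma wA_zero_inv {i : ℕ} (h : i + 0 < n) : (wA i 0 h)⁻¹ = wA i 0 h := by
  rw [wA_zero]
  exact (csA n).inv_simple _

end UniqueRW

open UniqueRW in
theorem number_of_elements_with_unique_reduced_word_in_type_A (n : ℕ) (hn : 1 ≤ n) :
    Nat.card {w : (CoxeterMatrix.Aₙ n).Group //
      ∃! ω : List (Fin n), (csA n).IsReduced ω ∧ (csA n).wordProd ω = w} = n ^ 2 + 1 := by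
  classical
  set F : Finset (W n) :=
    insert 1 ((Finset.range n ×ˢ Finset.range n).image (f n)) with hF
  have hmemF : ∀ w : W n, w ∈ F ↔ w = 1 ∨ ∃ p ∈ Finset.range n ×ˢ Finset.range n, f n p = w := by
    intro w
    rw [hF, Finset.mem_insert, Finset.mem_image]
  have hset : {w : W n | ∃! ω : List (Fin n),
      (csA n).IsReduced ω ∧ (csA n).wordProd ω = w} = ↑F := by
    ext w
    rw [Set.mem_setOf_eq, Finset.mem_coe, hmemF]
    constructor
    · intro hu
      rcases unique_shape hu with rfl | ⟨i, m, h, rfl | rfl⟩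
      · exact Or.inl rfl
      · refine Or.inr ⟨(i, i + m), ?_, ?_⟩
        · rw [Finset.mem_product]
          simp only [Finset.mem_range]
          omega
        · rw [f_eq_le (by omega) (by omega)]
          exact wA_congr _ _ (by omega)
      · cases m with
        | zero =>
          refine Or.inr ⟨(i, i), ?_, ?_⟩
          · rw [Finset.mem_product]
            simp only [Finset.mem_range]
            omega
          · rw [f_eq_le (by omega) (by omega), wA_zero_inv]
            exact wA_congr _ _ (by omega)
        | succ m =>
          refine Or.inr ⟨(i + m + 1, i), ?_, ?_⟩
          · rw [Finset.mem_product]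
            simp only [Finset.mem_range]
            omega
          · rw [f_eq_gt (by omega) (by omega)]
            rw [show (wA i (i + m + 1 - i) (by omega) : W n) = wA i (m+1) h from
              wA_congr _ _ (by omega)]
    · rintro (rfl | ⟨⟨i, j⟩, hp, rfl⟩)
      · exact one_exu
      · rw [Finset.mem_product] at hp
        simp only [Finset.mem_range] at hp
        exact f_exu hp.1 hp.2
  have h1f : (1 : W n) ∉ (Finset.range n ×ˢ Finset.range n).image (f n) := by
    rw [Finset.mem_image]
    rintro ⟨⟨i, j⟩, hp, hfp⟩
    rw [Finset.mem_product] at hp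
    simp only [Finset.mem_range] at hp
    exact f_ne_one hp.1 hp.2 hfp
  have hinj : Set.InjOn (f n) ↑(Finset.range n ×ˢ Finset.range n) := by
    rintro ⟨i, j⟩ hp ⟨i', j'⟩ hq he
    rw [Finset.mem_coe, Finset.mem_product] at hp hq
    simp only [Finset.mem_range] at hp hq
    have := f_inj hp.1 hp.2 hq.1 hq.2 he
    exact Prod.ext this.1 this.2
  calc Nat.card {w : W n // ∃! ω : List (Fin n),
        (csA n).IsReduced ω ∧ (csA n).wordProd ω = w}
      = ({w : W n | ∃! ω : List (Fin n),
          (csA n).IsReduced ω ∧ (csA n).wordProd ω = w} : Set (W n)).ncard :=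
        Nat.card_coe_set_eq _
    _ = (↑F : Set (W n)).ncard := by rw [hset]
    _ = F.card := Set.ncard_coe_finset F
    _ = n ^ 2 + 1 := by
        rw [hF, Finset.card_insert_of_notMem h1f, Finset.card_image_of_injOn hinj,
          Finset.card_product, Finset.card_range, pow_two]
end

section
/- For every n >= 2, the word w^n = (a1ab3ba2ab4b)^n is reduced, i.e., l(pi(w^n)) = 12n. -/
/-- The Coxeter matrix of the group called `D̃₆` in the paper, on the six
generators `a, b, 1, 2, 3, 4` (encoded as `0, 1, 2, 3, 4, 5` in `Fin 6`):
the pairs `{a,1}, {a,2}, {a,b}, {b,3}, {b,4}` satisfy the braid relation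
(Coxeter exponent `3`) and all other pairs of distinct generators commute
(Coxeter exponent `2`). -/
def D6affMatrix : CoxeterMatrix (Fin 6) where
  M := !![1, 3, 3, 3, 2, 2;
          3, 1, 2, 2, 3, 3;
          3, 2, 1, 2, 2, 2;
          3, 2, 2, 1, 2, 2;
          2, 3, 2, 2, 1, 2;
          2, 3, 2, 2, 2, 1]
  isSymm := by decide
  diagonal := by decide
  off_diagonal := by
    intro i i' h
    fin_cases i <;> fin_cases i' <;> first | exact absurd rfl h | decide

/-- The Coxeter system of the group `D̃₆`. -/
noncomputable def csD : CoxeterSystem D6affMatrix D6affMatrix.Group :=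
  D6affMatrix.toCoxeterSystem

/-- The generators `a, b, 1, 2, 3, 4`. -/
def ga : Fin 6 := 0
def gb : Fin 6 := 1
def g1 : Fin 6 := 2
def g2 : Fin 6 := 3
def g3 : Fin 6 := 4
def g4 : Fin 6 := 5

/-- The word `w = a1ab3ba2ab4b`. -/
def wD : List (Fin 6) := [ga, g1, ga, gb, g3, gb, ga, g2, ga, gb, g4, gb]

/-- The word `w₂ = a1ab4ba2ab3b`. -/
def w2D : List (Fin 6) := [ga, g1, ga, gb, g4, gb, ga, g2, ga, gb, g3, gb]

/-- The word `w₃ = a2ab3ba1ab4b`. -/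
def w3D : List (Fin 6) := [ga, g2, ga, gb, g3, gb, ga, g1, ga, gb, g4, gb]

/-- The `n`-fold concatenation of a word. -/
def wpow (u : List (Fin 6)) (n : ℕ) : List (Fin 6) := (List.replicate n u).flatten

/-- A word `ω` is a uniquely labelled geodesic (u.l.g.) in `D̃₆` if it is reduced
and every reduced word with the same product and the same label equals `ω`. -/
def IsULGD (ω : List (Fin 6)) : Prop :=
  csD.IsReduced ω ∧
    ∀ ω' : List (Fin 6), csD.IsReduced ω' →
      csD.wordProd ω' = csD.wordProd ω →
      (∀ i : Fin 6, ω'.count i = ω.count i) → ω' = ω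


/-! ### Auxiliary development: the affine reflection representation -/

section AuxD6

open Matrix

abbrev G6 := Matrix (Fin 6) (Fin 6) ℤ

/-- The images of the six generators in the affine reflection representation of `D̃₅`
(acting on homogeneous coordinates `(x₁,…,x₅,c)`). -/
def SS : Fin 6 → G6
  | 0 => !![1,0,0,0,0,0; 0,0,1,0,0,0; 0,1,0,0,0,0; 0,0,0,1,0,0; 0,0,0,0,1,0; 0,0,0,0,0,1]
  | 1 => !![1,0,0,0,0,0; 0,1,0,0,0,0; 0,0,0,1,0,0; 0,0,1,0,0,0; 0,0,0,0,1,0; 0,0,0,0,0,1]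
  | 2 => !![0,1,0,0,0,0; 1,0,0,0,0,0; 0,0,1,0,0,0; 0,0,0,1,0,0; 0,0,0,0,1,0; 0,0,0,0,0,1]
  | 3 => !![0,-1,0,0,0,1; -1,0,0,0,0,1; 0,0,1,0,0,0; 0,0,0,1,0,0; 0,0,0,0,1,0; 0,0,0,0,0,1]
  | 4 => !![1,0,0,0,0,0; 0,1,0,0,0,0; 0,0,1,0,0,0; 0,0,0,0,1,0; 0,0,0,1,0,0; 0,0,0,0,0,1]
  | 5 => !![1,0,0,0,0,0; 0,1,0,0,0,0; 0,0,1,0,0,0; 0,0,0,0,-1,0; 0,0,0,-1,0,0; 0,0,0,0,0,1]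

theorem liftable : CoxeterMatrix.IsLiftable D6affMatrix SS := by
  unfold CoxeterMatrix.IsLiftable; decide

/-- Base point `(5,4,3,2,1)/16` of the fundamental alcove, scaled by 16,
in homogeneous coordinates. -/
def pv : Fin 6 → ℤ := ![5,4,3,2,1,16]

def rt (i j : Fin 6) (a b : ℤ) : Fin 6 → ℤ :=
  fun k => if k = i then a else if k = j then b else 0

def pairsD : List (Fin 6 × Fin 6) := [(0,1),(0,2),(0,3),(0,4),(1,2),(1,3),(1,4),(2,3),(2,4),(3,4)]

/-- The 40 roots `±eᵢ ± eⱼ` of `D₅`, as linear functionals in homogeneous coordinates. -/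
def rootList : List (Fin 6 → ℤ) :=
  pairsD.flatMap fun p => [rt p.1 p.2 1 1, rt p.1 p.2 1 (-1), rt p.1 p.2 (-1) 1, rt p.1 p.2 (-1) (-1)]

def Phi : Finset (Fin 6 → ℤ) := rootList.toFinset

/-- Number of multiples of 16 in the interval between `a` and `b` (for non-multiples). -/
def dd (a b : ℤ) : ℕ := (b / 16 - a / 16).natAbs

theorem dd_self (a : ℤ) : dd a a = 0 := by unfold dd; omega

theorem dd_triangle (a b c : ℤ) : dd a c ≤ dd a b + dd b c := by unfold dd; omega

theorem dd_shift (a b m : ℤ) : dd (a + 16 * m) (b + 16 * m) = dd a b := by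
  unfold dd
  rw [mul_comm (16:ℤ) m, Int.add_mul_ediv_right a m (by norm_num),
    Int.add_mul_ediv_right b m (by norm_num)]
  omega

theorem dd_add (a c : ℤ) : dd a (a + 16 * c) = c.natAbs := by
  unfold dd
  rw [mul_comm (16:ℤ) c, Int.add_mul_ediv_right a c (by norm_num)]
  omega

def e5v : Fin 6 → ℤ := fun j => if j = 5 then 1 else 0

def strip (u : Fin 6 → ℤ) : Fin 6 → ℤ := fun j => if j = 5 then 0 else u j

/-- The key invariant: `A` fixes the homogeneous coordinate, and acts on the root
functionals by an (injective) permutation composed with adding integer multiples of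
the homogeneous functional. -/
def Pres (A : G6) : Prop :=
  A 5 = e5v ∧
  (∀ α ∈ Phi, strip (α ᵥ* A) ∈ Phi) ∧
  (∀ α ∈ Phi, ∀ β ∈ Phi, strip (α ᵥ* A) = strip (β ᵥ* A) → α = β)

instance (A : G6) : Decidable (Pres A) := by unfold Pres; infer_instance

set_option maxHeartbeats 4000000 in
theorem presS : ∀ i, Pres (SS i) := by decide

set_option maxHeartbeats 1000000 in
theorem pres1 : Pres (1 : G6) := by decide

set_option maxHeartbeats 2000000 in
theorem crossS : ∀ i, (∑ α ∈ Phi, dd (α ⬝ᵥ pv) (α ⬝ᵥ (SS i *ᵥ pv))) = 2 := by decide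

/-- The translation vector of `T³` where `T` is the image of `w`. -/
def lamv : Fin 6 → ℤ := ![-2,0,2,0,2,0]

set_option maxHeartbeats 1000000 in
theorem lam_sum : (∑ α ∈ Phi, (α ⬝ᵥ lamv).natAbs) = 72 := by decide

def wprod (ω : List (Fin 6)) : G6 := (ω.map SS).prod

def Nmat : G6 :=
  !![0,0,0,0,0,-2; 0,0,0,0,0,0; 0,0,0,0,0,2; 0,0,0,0,0,0; 0,0,0,0,0,2; 0,0,0,0,0,0]

def Umat (m : ℤ) : G6 := 1 + m • Nmat

set_option maxHeartbeats 1000000 in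
theorem N2 : Nmat * Nmat = 0 := by decide

set_option maxHeartbeats 1000000 in
theorem N_mulVec : Nmat *ᵥ pv = (16 : ℤ) • lamv := by decide

set_option maxHeartbeats 1000000 in
theorem T3 : (wprod wD) ^ 3 = Umat 1 := by decide

theorem Umat_zero : Umat 0 = 1 := by simp [Umat]

theorem strip_decomp (u : Fin 6 → ℤ) : u = strip u + fun j => u 5 * e5v j := by
  funext j
  by_cases h : j = 5 <;> simp [strip, e5v, h]

theorem scaled_e5_vecMul (c : ℤ) (A : G6) : (fun i => c * e5v i) ᵥ* A = fun j => c * A 5 j := by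
  funext j
  simp [Matrix.vecMul, dotProduct, e5v, Fin.sum_univ_six]

theorem vecMul_split (u : Fin 6 → ℤ) (A : G6) (h5 : A 5 = e5v) :
    u ᵥ* A = strip u ᵥ* A + fun j => u 5 * e5v j := by
  conv_lhs => rw [strip_decomp u]
  rw [Matrix.add_vecMul, scaled_e5_vecMul, h5]

theorem strip_add_e5 (x : Fin 6 → ℤ) (c : ℤ) : strip (x + fun j => c * e5v j) = strip x := by
  funext j
  by_cases h : j = 5 <;> simp [strip, e5v, h]

theorem Pres.mul {A B : G6} (hA : Pres A) (hB : Pres B) : Pres (A * B) := by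
  obtain ⟨hA5, hAin, hAinj⟩ := hA
  obtain ⟨hB5, hBin, hBinj⟩ := hB
  have key : ∀ α : Fin 6 → ℤ,
      (α ᵥ* (A * B)) = (strip (α ᵥ* A)) ᵥ* B + fun j => (α ᵥ* A) 5 * e5v j := by
    intro α
    rw [← Matrix.vecMul_vecMul, vecMul_split (α ᵥ* A) B hB5]
  have hstrip : ∀ α : Fin 6 → ℤ, strip (α ᵥ* (A * B)) = strip ((strip (α ᵥ* A)) ᵥ* B) := by
    intro α
    rw [key, strip_add_e5]
  refine ⟨?_, ?_, ?_⟩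
  · funext j
    rw [Matrix.mul_apply]
    simp [hA5, e5v, Fin.sum_univ_six, hB5]
  · intro α hα
    rw [hstrip]
    exact hBin _ (hAin α hα)
  · intro α hα β hβ h
    rw [hstrip, hstrip] at h
    exact hAinj α hα β hβ (hBinj _ (hAin α hα) _ (hAin β hβ) h)

theorem presProd : ∀ ω : List (Fin 6), Pres (wprod ω)
  | [] => pres1
  | i :: ω => by
      rw [wprod, List.map_cons, List.prod_cons]
      exact (presS i).mul (presProd ω)

theorem mulVec_apply5 {A : G6} (hA5 : A 5 = e5v) (x : Fin 6 → ℤ) : (A *ᵥ x) 5 = x 5 := by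
  show A 5 ⬝ᵥ x = x 5
  rw [hA5]
  simp [dotProduct, e5v, Fin.sum_univ_six]

theorem dot_split (u q : Fin 6 → ℤ) (hq : q 5 = 16) : u ⬝ᵥ q = strip u ⬝ᵥ q + 16 * u 5 := by
  conv_lhs => rw [strip_decomp u]
  rw [add_dotProduct]
  congr 1
  simp [dotProduct, e5v, Fin.sum_univ_six, hq]
  ring

set_option maxHeartbeats 1600000 in
theorem sum_reindex {A : G6} (hA : Pres A) {q q' : Fin 6 → ℤ} (hq : q 5 = 16) (hq' : q' 5 = 16) :
    (∑ α ∈ Phi, dd ((α ᵥ* A) ⬝ᵥ q) ((α ᵥ* A) ⬝ᵥ q')) ≤ ∑ β ∈ Phi, dd (β ⬝ᵥ q) (β ⬝ᵥ q') := by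
  obtain ⟨hA5, hAin, hAinj⟩ := hA
  have step : ∀ α ∈ Phi, dd ((α ᵥ* A) ⬝ᵥ q) ((α ᵥ* A) ⬝ᵥ q')
      = dd ((strip (α ᵥ* A)) ⬝ᵥ q) ((strip (α ᵥ* A)) ⬝ᵥ q') := by
    intro α _
    rw [dot_split (α ᵥ* A) q hq, dot_split (α ᵥ* A) q' hq']
    exact dd_shift _ _ _
  rw [Finset.sum_congr rfl step]
  calc ∑ α ∈ Phi, dd ((strip (α ᵥ* A)) ⬝ᵥ q) ((strip (α ᵥ* A)) ⬝ᵥ q')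
      = ∑ β ∈ Phi.image (fun α => strip (α ᵥ* A)), dd (β ⬝ᵥ q) (β ⬝ᵥ q') :=
        (Finset.sum_image (g := fun α => strip (α ᵥ* A)) (f := fun β => dd (β ⬝ᵥ q) (β ⬝ᵥ q'))
          (fun x hx y hy h => hAinj x hx y hy h)).symm
    _ ≤ ∑ β ∈ Phi, dd (β ⬝ᵥ q) (β ⬝ᵥ q') :=
        Finset.sum_le_sum_of_subset (fun β hβ => by
          obtain ⟨α, hα, rfl⟩ := Finset.mem_image.mp hβ
          exact hAin α hα)

/-- The number of hyperplanes (of the affine `D₅` arrangement) separating the base point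
from its image under `A`. -/
def fA (A : G6) : ℕ := ∑ α ∈ Phi, dd (α ⬝ᵥ pv) (α ⬝ᵥ (A *ᵥ pv))

theorem fA_one : fA 1 = 0 := by
  unfold fA
  rw [Finset.sum_congr rfl (fun α _ => by rw [Matrix.one_mulVec, dd_self])]
  simp

theorem pv5 : pv 5 = 16 := rfl

theorem fA_lipschitz {A : G6} (hA : Pres A) (i : Fin 6) : fA (A * SS i) ≤ fA A + 2 := by
  have h1 : fA (A * SS i) ≤ fA A + ∑ α ∈ Phi, dd (α ⬝ᵥ (A *ᵥ pv)) (α ⬝ᵥ (A *ᵥ (SS i *ᵥ pv))) := by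
    rw [fA, fA, ← Finset.sum_add_distrib]
    apply Finset.sum_le_sum
    intro α _
    rw [← Matrix.mulVec_mulVec]
    exact dd_triangle _ _ _
  have h2 : (∑ α ∈ Phi, dd (α ⬝ᵥ (A *ᵥ pv)) (α ⬝ᵥ (A *ᵥ (SS i *ᵥ pv)))) ≤ 2 := by
    calc (∑ α ∈ Phi, dd (α ⬝ᵥ (A *ᵥ pv)) (α ⬝ᵥ (A *ᵥ (SS i *ᵥ pv))))
        = ∑ α ∈ Phi, dd ((α ᵥ* A) ⬝ᵥ pv) ((α ᵥ* A) ⬝ᵥ (SS i *ᵥ pv)) := by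
          refine Finset.sum_congr rfl fun α _ => ?_
          rw [Matrix.dotProduct_mulVec, Matrix.dotProduct_mulVec]
      _ ≤ ∑ β ∈ Phi, dd (β ⬝ᵥ pv) (β ⬝ᵥ (SS i *ᵥ pv)) :=
          sum_reindex hA pv5 (by rw [mulVec_apply5 (presS i).1 pv, pv5])
      _ = 2 := crossS i
  omega

theorem fA_word (ω : List (Fin 6)) : fA (wprod ω) ≤ 2 * ω.length := by
  induction ω using List.reverseRecOn with
  | nil => simp [wprod, fA_one]
  | append_singleton ω i ih =>
      have hsplit : wprod (ω ++ [i]) = wprod ω * SS i := by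
        simp only [wprod, List.map_append, List.prod_append, List.map_singleton,
          List.prod_singleton]
      rw [hsplit]
      have := fA_lipschitz (presProd ω) i
      have hl : (ω ++ [i]).length = ω.length + 1 := by simp
      omega

noncomputable def phiD : D6affMatrix.Group →* G6 := csD.lift ⟨SS, liftable⟩

theorem phi_wordProd (ω : List (Fin 6)) : phiD (csD.wordProd ω) = wprod ω := by
  rw [CoxeterSystem.wordProd, wprod, MonoidHom.map_list_prod, List.map_map]
  have : phiD ∘ csD.simple = SS := funext fun i => csD.lift_apply_simple liftable i
  rw [this]

theorem len_lb (g : D6affMatrix.Group) : fA (phiD g) ≤ 2 * csD.length g := by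
  obtain ⟨ω, h1, h2⟩ := csD.exists_reduced_word g
  subst h2
  rw [phi_wordProd]
  calc fA (wprod ω) ≤ 2 * ω.length := fA_word ω
    _ = 2 * csD.length (csD.wordProd ω) := by rw [h1]

theorem Umat_mul (m : ℤ) : Umat m * Umat 1 = Umat (m + 1) := by
  simp only [Umat, add_mul, mul_add, one_mul, mul_one, Matrix.smul_mul, Matrix.mul_smul,
    N2, smul_zero, add_zero, add_smul, one_smul, smul_smul]
  abel

theorem Umat_pow : ∀ m : ℕ, (Umat 1) ^ m = Umat m
  | 0 => by rw [pow_zero, Nat.cast_zero, Umat_zero]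
  | (m + 1) => by
      rw [pow_succ, Umat_pow m, Umat_mul]
      push_cast
      ring_nf

theorem Umat_mulVec (m : ℤ) : Umat m *ᵥ pv = pv + fun k => 16 * m * lamv k := by
  rw [Umat, Matrix.add_mulVec, Matrix.one_mulVec, Matrix.smul_mulVec, N_mulVec]
  congr 1
  funext k
  simp [smul_smul]
  ring

theorem fA_Umat (m : ℕ) : fA (Umat m) = 72 * m := by
  unfold fA
  have step : ∀ α ∈ Phi, dd (α ⬝ᵥ pv) (α ⬝ᵥ (Umat m *ᵥ pv)) = (α ⬝ᵥ lamv).natAbs * m := by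
    intro α _
    rw [Umat_mulVec, dotProduct_add]
    have hdot : α ⬝ᵥ (fun k => 16 * (m:ℤ) * lamv k) = 16 * ((m:ℤ) * (α ⬝ᵥ lamv)) := by
      simp [dotProduct, Fin.sum_univ_six]
      ring
    rw [hdot, dd_add, Int.natAbs_mul]
    simp [mul_comm]
  rw [Finset.sum_congr rfl step, ← Finset.sum_mul, lam_sum]

theorem wpow_add (u : List (Fin 6)) (m k : ℕ) : wpow u (m + k) = wpow u m ++ wpow u k := by
  rw [wpow, wpow, wpow, List.replicate_add, List.flatten_append]

theorem wprod_wpow (u : List (Fin 6)) (k : ℕ) : wprod (wpow u k) = (wprod u) ^ k := by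
  induction k with
  | zero => simp [wpow, wprod]
  | succ k ih =>
      have : wpow u (k + 1) = u ++ wpow u k := by
        rw [add_comm, wpow_add, wpow, List.replicate_one, List.flatten_singleton]
      rw [this, wprod, List.map_append, List.prod_append, ← wprod, ← wprod, ih, pow_succ']

theorem wpow_length (u : List (Fin 6)) (k : ℕ) : (wpow u k).length = k * u.length := by
  induction k with
  | zero => simp [wpow]
  | succ k ih =>
      have : wpow u (k + 1) = u ++ wpow u k := by
        rw [add_comm, wpow_add, wpow, List.replicate_one, List.flatten_singleton]
      rw [this, List.length_append, ih]
      ring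

theorem lower_bound_mult (m : ℕ) : 36 * m ≤ csD.length (csD.wordProd (wpow wD (3 * m))) := by
  have h := len_lb (csD.wordProd (wpow wD (3 * m)))
  rw [phi_wordProd, wprod_wpow, pow_mul, T3, Umat_pow, fA_Umat] at h
  omega

end AuxD6

theorem wpow_isReduced (n : ℕ) (hn : 2 ≤ n) :
    csD.IsReduced (wpow wD n) ∧ csD.length (csD.wordProd (wpow wD n)) = 12 * n := by
  have hr3 : n % 3 < 3 := Nat.mod_lt n (by norm_num)
  have hk : n + (3 - n % 3) = 3 * (n / 3 + 1) := by omega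
  have hsplit : csD.wordProd (wpow wD (3 * (n / 3 + 1)))
      = csD.wordProd (wpow wD n) * csD.wordProd (wpow wD (3 - n % 3)) := by
    rw [← csD.wordProd_append, ← wpow_add, hk]
  have h1 := csD.length_mul_le (csD.wordProd (wpow wD n)) (csD.wordProd (wpow wD (3 - n % 3)))
  have h2 := lower_bound_mult (n / 3 + 1)
  rw [hsplit] at h2
  have h3 := csD.length_wordProd_le (wpow wD (3 - n % 3))
  have h4 := csD.length_wordProd_le (wpow wD n)
  rw [wpow_length] at h3 h4
  have hw12 : wD.length = 12 := rfl
  rw [hw12] at h3 h4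
  have hlen : csD.length (csD.wordProd (wpow wD n)) = 12 * n := by omega
  constructor
  · show csD.length (csD.wordProd (wpow wD n)) = (wpow wD n).length
    rw [hlen, wpow_length, hw12]
    ring
  · exact hlen
end

section
/- In the Coxeter group of type A_n, if omega is a uniquely labelled geodesic, then the set of indices occurring in omega is either empty or an integer interval {l, l+1, ..., m} for some 1 <= l <= m <= n. -/
/-- A word `ω` in the generators of the Coxeter group of type `Aₙ` is a
uniquely labelled geodesic (u.l.g.) if it is reduced and every reduced word with
the same product and the same label (number of occurrences of each letter) equals `ω`. -/
def IsULGA (n : ℕ) (ω : List (Fin n)) : Prop :=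
  (csA n).IsReduced ω ∧
    ∀ ω' : List (Fin n), (csA n).IsReduced ω' →
      (csA n).wordProd ω' = (csA n).wordProd ω →
      (∀ i : Fin n, ω'.count i = ω.count i) → ω' = ω


lemma simple_comm {n : ℕ} (a b : Fin n) (hab : (CoxeterMatrix.Aₙ n) a b = 2) :
    (csA n).simple a * (csA n).simple b = (csA n).simple b * (csA n).simple a := by
  have h := (csA n).simple_mul_simple_pow a b
  rw [hab, sq] at h
  have h2 := eq_inv_of_mul_eq_one_left h
  rwa [mul_inv_rev, CoxeterSystem.inv_simple, CoxeterSystem.inv_simple] at h2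

lemma Amat_eq_two {n : ℕ} {a b : Fin n} (k : Fin n) (hab : a < k ∧ k < b ∨ b < k ∧ k < a) :
    (CoxeterMatrix.Aₙ n) a b = 2 := by
  have : ¬ (a = b) ∧ ¬ ((b:ℕ)+1 = a ∨ (a:ℕ)+1 = b) := by
    rcases hab with ⟨h1,h2⟩|⟨h1,h2⟩ <;>
    · have h1' := Fin.lt_iff_val_lt_val.mp h1
      have h2' := Fin.lt_iff_val_lt_val.mp h2
      constructor
      · intro hh; have := congrArg Fin.val hh; omega
      · rintro (hh|hh) <;> omega
  show (if a = b then 1 else (if (b:ℕ)+1 = a ∨ (a:ℕ)+1 = b then 3 else 2)) = 2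
  rw [if_neg this.1, if_neg this.2]

lemma cross_head {n : ℕ} (k : Fin n) : ∀ (ω : List (Fin n)) (x : Fin n),
    (∀ y ∈ ω, y ≠ k) →
    (∃ b ∈ ω, (x < k ∧ k < b) ∨ (b < k ∧ k < x)) →
    ∃ l1 a b l2, x :: ω = l1 ++ a :: b :: l2 ∧ ((a < k ∧ k < b) ∨ (b < k ∧ k < a)) := by
  intro ω
  induction ω with
  | nil => rintro x _ ⟨b, hb, _⟩; exact absurd hb List.not_mem_nil
  | cons y rest ih =>
    intro x hne ⟨b, hb, hcr⟩
    by_cases hxy : (x < k ∧ k < y) ∨ (y < k ∧ k < x)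
    · exact ⟨[], x, y, rest, rfl, hxy⟩
    · have hbr : b ∈ rest := by
        rcases List.mem_cons.mp hb with hh | hh
        · exact absurd (hh ▸ hcr) hxy
        · exact hh
      have hyk : y ≠ k := hne y List.mem_cons_self
      have hcr' : (y < k ∧ k < b) ∨ (b < k ∧ k < y) := by
        rcases lt_trichotomy y k with hy | hy | hy
        · rcases hcr with ⟨h1, h2⟩ | ⟨h1, h2⟩
          · exact Or.inl ⟨hy, h2⟩
          · exact absurd (Or.inr ⟨hy, h2⟩) hxy
        · exact absurd hy hyk
        · rcases hcr with ⟨h1, h2⟩ | ⟨h1, h2⟩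
          · exact absurd (Or.inl ⟨h1, hy⟩) hxy
          · exact Or.inr ⟨h1, hy⟩
      obtain ⟨l1, a, b', l2, heq, hcr2⟩ :=
        ih y (fun z hz => hne z (List.mem_cons_of_mem y hz)) ⟨b, hbr, hcr'⟩
      exact ⟨x :: l1, a, b', l2, by rw [List.cons_append, ← heq], hcr2⟩

lemma cross {n : ℕ} (k : Fin n) (ω : List (Fin n))
    (hne : ∀ y ∈ ω, y ≠ k)
    (ha : ∃ a ∈ ω, a < k) (hb : ∃ b ∈ ω, k < b) :
    ∃ l1 a b l2, ω = l1 ++ a :: b :: l2 ∧ ((a < k ∧ k < b) ∨ (b < k ∧ k < a)) := by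
  cases ω with
  | nil => obtain ⟨a, ha, _⟩ := ha; exact absurd ha List.not_mem_nil
  | cons x rest =>
    have hxk : x ≠ k := hne x List.mem_cons_self
    rcases lt_trichotomy x k with hx | hx | hx
    · obtain ⟨b, hbmem, hbk⟩ := hb
      have hbr : b ∈ rest := by
        rcases List.mem_cons.mp hbmem with hh | hh
        · subst hh; exact absurd hbk (lt_asymm hx)
        · exact hh
      exact cross_head k rest x (fun z hz => hne z (List.mem_cons_of_mem x hz))
        ⟨b, hbr, Or.inl ⟨hx, hbk⟩⟩
    · exact absurd hx hxk
    · obtain ⟨a, hamem, hak⟩ := ha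
      have har : a ∈ rest := by
        rcases List.mem_cons.mp hamem with hh | hh
        · subst hh; exact absurd hak (lt_asymm hx)
        · exact hh
      exact cross_head k rest x (fun z hz => hne z (List.mem_cons_of_mem x hz))
        ⟨a, har, Or.inr ⟨hak, hx⟩⟩

theorem letters_of_ulg_form_interval_in_type_A (n : ℕ) (hn : 1 ≤ n)
    (ω : List (Fin n)) (h : IsULGA n ω) :
    {i : Fin n | i ∈ ω} = ∅ ∨
      ∃ l m : Fin n, l ≤ m ∧ {i : Fin n | i ∈ ω} = Set.Icc l m := by
  rcases eq_or_ne ω [] with hnil | hnil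
  · left; subst hnil; simp
  · right
    have hFne : ω.toFinset.Nonempty := by
      obtain ⟨x, hx⟩ := List.exists_mem_of_ne_nil ω hnil
      exact ⟨x, List.mem_toFinset.mpr hx⟩
    obtain ⟨x0, hx0⟩ := id hFne
    refine ⟨ω.toFinset.min' hFne, ω.toFinset.max' hFne,
      (Finset.min'_le _ _ hx0).trans (Finset.le_max' _ _ hx0), ?_⟩
    ext k
    simp only [Set.mem_setOf_eq, Set.mem_Icc]
    constructor
    · intro hk
      exact ⟨Finset.min'_le _ _ (List.mem_toFinset.mpr hk),
        Finset.le_max' _ _ (List.mem_toFinset.mpr hk)⟩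
    · rintro ⟨hlk, hkm⟩
      by_contra hk
      have hlmem : ω.toFinset.min' hFne ∈ ω := List.mem_toFinset.mp (Finset.min'_mem _ _)
      have hmmem : ω.toFinset.max' hFne ∈ ω := List.mem_toFinset.mp (Finset.max'_mem _ _)
      have hlk' : ω.toFinset.min' hFne < k :=
        lt_of_le_of_ne hlk (fun hh => hk (hh ▸ hlmem))
      have hkm' : k < ω.toFinset.max' hFne :=
        lt_of_le_of_ne hkm (fun hh => hk (hh ▸ hmmem))
      obtain ⟨l1, a, b, l2, hdec, hcr⟩ := cross k ω
        (fun y hy hyk => hk (hyk ▸ hy))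
        ⟨_, hlmem, hlk'⟩ ⟨_, hmmem, hkm'⟩
      have hM : (CoxeterMatrix.Aₙ n) b a = 2 := Amat_eq_two k hcr.symm
      set ω' := l1 ++ b :: a :: l2 with hω'
      have hprod : (csA n).wordProd ω' = (csA n).wordProd ω := by
        rw [hdec, hω', CoxeterSystem.wordProd_append, CoxeterSystem.wordProd_append,
          CoxeterSystem.wordProd_cons, CoxeterSystem.wordProd_cons,
          CoxeterSystem.wordProd_cons, CoxeterSystem.wordProd_cons,
          ← mul_assoc ((csA n).simple b), ← mul_assoc ((csA n).simple a),
          simple_comm b a hM]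
      have hlen : ω'.length = ω.length := by simp [hω', hdec]
      have hred' : (csA n).IsReduced ω' := by
        have h1 : (csA n).length ((csA n).wordProd ω) = ω.length := h.1
        show (csA n).length ((csA n).wordProd ω') = ω'.length
        rw [hprod, h1, hlen]
      have hcount : ∀ i : Fin n, ω'.count i = ω.count i := by
        intro i
        rw [hdec, hω']
        simp only [List.count_append, List.count_cons]
        omega
      have heq := h.2 ω' hred' hprod hcount
      rw [hdec, hω'] at heq
      have h2 := List.append_cancel_left heq
      have hba : b = a := (List.cons.injEq _ _ _ _ ▸ h2).1
      rcases hcr with ⟨h1, h2'⟩ | ⟨h1, h2'⟩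
      · exact absurd (hba ▸ h1.trans h2') (lt_irrefl _)
      · exact absurd (hba ▸ h1.trans h2') (lt_irrefl _)
end

section
/- In the Coxeter group of type A_n, let 1 <= l and l + 2 <= m <= n. Then none of the following four words occurs as a contiguous (infix) subword of a uniquely labelled geodesic: u = (m, m-1, ..., l+1, l, l+1, ..., m-1, m, m-1) (descend from m to l, ascend back to m, then m-1), the reverse of u, v = (l, l+1, ..., m-1, m, m-1, ..., l+1, l, l+1) (ascend from l to m, descend back to l, then l+1), and the reverse of v. -/
/-- The word `s_m s_{m-1} ... s_{l+1} s_l s_{l+1} ... s_{m-1} s_m s_{m-1}`,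
written with 1-based generator indices: descend from `m` to `l`, ascend back to
`m`, then `m - 1`. -/
def wordU (l m : ℕ) : List ℕ :=
  (List.range' l (m - l + 1)).reverse ++ List.range' (l + 1) (m - l) ++ [m - 1]

/-- The word `s_l s_{l+1} ... s_{m-1} s_m s_{m-1} ... s_{l+1} s_l s_{l+1}`,
written with 1-based generator indices: ascend from `l` to `m`, descend back to
`l`, then `l + 1`. -/
def wordV (l m : ℕ) : List ℕ :=
  List.range' l (m - l + 1) ++ (List.range' l (m - l)).reverse ++ [l + 1]

namespace ForbiddenAux

open List

/-- 1-based natural index to `Fin n`. -/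
def gA (n : ℕ) (hn : 1 ≤ n) (k : ℕ) : Fin n := ⟨min (k-1) (n-1), by omega⟩

lemma gA_coe {n : ℕ} (hn : 1 ≤ n) {k : ℕ} (h1 : 1 ≤ k) (h2 : k ≤ n) :
    ((gA n hn k : Fin n) : ℕ) = k - 1 := by
  simp only [gA]; omega

lemma M_two {n : ℕ} (hn : 1 ≤ n) {a b : ℕ} (h1 : 1 ≤ a) (h1' : 1 ≤ b)
    (h2 : a + 2 ≤ b ∨ b + 2 ≤ a) (h3 : a ≤ n) (h3' : b ≤ n) :
    CoxeterMatrix.Aₙ n (gA n hn a) (gA n hn b) = 2 := by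
  have ha := gA_coe hn h1 h3
  have hb := gA_coe hn h1' h3'
  show (CoxeterMatrix.Aₙ n).M _ _ = 2
  simp only [CoxeterMatrix.Aₙ, CoxeterMatrix.A, Matrix.of_apply]
  rw [if_neg, if_neg]
  · rw [ha, hb]; omega
  · rw [Fin.ext_iff, ha, hb]; omega

lemma M_three {n : ℕ} (hn : 1 ≤ n) {a b : ℕ} (h1 : 1 ≤ a) (h1' : 1 ≤ b)
    (h2 : a + 1 = b ∨ b + 1 = a) (h3 : a ≤ n) (h3' : b ≤ n) :
    CoxeterMatrix.Aₙ n (gA n hn a) (gA n hn b) = 3 := by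
  have ha := gA_coe hn h1 h3
  have hb := gA_coe hn h1' h3'
  show (CoxeterMatrix.Aₙ n).M _ _ = 3
  simp only [CoxeterMatrix.Aₙ, CoxeterMatrix.A, Matrix.of_apply]
  rw [if_neg, if_pos]
  · rw [ha, hb]; omega
  · rw [Fin.ext_iff, ha, hb]; omega

section CoxHelpers

variable {B W : Type*} [Group W] {M : CoxeterMatrix B} (cs : CoxeterSystem M W)

lemma comm_of_two {i j : B} (h : M i j = 2) :
    cs.simple i * cs.simple j = cs.simple j * cs.simple i := by
  have hp := cs.simple_mul_simple_pow i j
  rw [h, pow_two] at hp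
  calc cs.simple i * cs.simple j = (cs.simple i * cs.simple j)⁻¹ :=
        eq_inv_of_mul_eq_one_left hp
    _ = cs.simple j * cs.simple i := by rw [mul_inv_rev, cs.inv_simple, cs.inv_simple]

lemma braid_of_three {i j : B} (h : M i j = 3) :
    cs.simple i * cs.simple j * cs.simple i = cs.simple j * cs.simple i * cs.simple j := by
  have hp := cs.simple_mul_simple_pow i j
  rw [h, show (3:ℕ) = 2 + 1 from rfl, pow_succ, pow_two] at hp
  have h2 : (cs.simple i * cs.simple j) * (cs.simple i * cs.simple j)
      = (cs.simple i * cs.simple j)⁻¹ := eq_inv_of_mul_eq_one_left hp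
  calc cs.simple i * cs.simple j * cs.simple i
      = (cs.simple i * cs.simple j) * (cs.simple i * cs.simple j) * cs.simple j := by
        rw [mul_assoc (cs.simple i * cs.simple j), cs.simple_mul_simple_cancel_right]
    _ = (cs.simple i * cs.simple j)⁻¹ * cs.simple j := by rw [h2]
    _ = cs.simple j * cs.simple i * cs.simple j := by
        rw [mul_inv_rev, cs.inv_simple, cs.inv_simple]

lemma commute_wordProd {x : W} (w : List B)
    (h : ∀ j ∈ w, Commute x (cs.simple j)) : Commute x (cs.wordProd w) := by
  induction w with
  | nil => simpa [CoxeterSystem.wordProd_nil] using Commute.one_right x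
  | cons a t ih =>
      rw [CoxeterSystem.wordProd_cons]
      exact (h a (mem_cons_self (a := a) (l := t))).mul_right (ih fun j hj => h j (mem_cons_of_mem a hj))

end CoxHelpers

lemma swap_assoc {W : Type*} [Group W] {a b : W} (h : a * b = b * a) (x : W) :
    a * (b * x) = b * (a * x) := by
  rw [← mul_assoc, h, mul_assoc]

lemma braid_assoc {W : Type*} [Group W] {a b : W} (h : a * b * a = b * a * b) (x : W) :
    a * (b * (a * x)) = b * (a * (b * x)) := by
  rw [← mul_assoc, ← mul_assoc, h, mul_assoc, mul_assoc]

section Ranges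

lemma range'_two (s : ℕ) : List.range' s 2 = [s, s+1] := rfl

lemma hsplitD {l m : ℕ} (hlm : l + 2 ≤ m) :
    List.range' l (m - l + 1) = l :: List.range' (l + 1) (m - l) :=
  List.range'_succ (s := l) (n := m - l) (step := 1)

lemma hsplitA {l m : ℕ} (hlm : l + 2 ≤ m) :
    List.range' (l + 1) (m - l) = List.range' (l + 1) (m - l - 2) ++ [m - 1, m] := by
  have h := List.range'_append_1 (s := l+1) (m := m - l - 2) (n := 2)
  rw [show l + 1 + (m - l - 2) = m - 1 by omega, show m - l - 2 + 2 = m - l by omega] at h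
  rw [← h, range'_two, show m - 1 + 1 = m by omega]

lemma hsplitM {l m : ℕ} (hlm : l + 2 ≤ m) :
    List.range' l (m - l + 1) = List.range' l (m - l) ++ [m] := by
  have h := List.range'_append_1 (s := l) (m := m - l) (n := 1)
  rw [show l + (m - l) = m by omega] at h
  rw [← h, List.range'_one]

lemma hsplitR {l m : ℕ} (hlm : l + 2 ≤ m) :
    List.range' l (m - l) = l :: (l+1) :: List.range' (l + 2) (m - l - 2) := by
  rw [show m - l = (m - l - 2) + 1 + 1 by omega, List.range'_succ, List.range'_succ,
    show l + 1 + 1 = l + 2 by omega, show m - l - 2 + 1 + 1 - 2 = m - l - 2 by omega]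

end Ranges

lemma invU {n : ℕ} (hn : 1 ≤ n) {l m : ℕ} (hl : 1 ≤ l) (hlm : l + 2 ≤ m) (hm : m ≤ n) :
    (csA n).wordProd ((wordU l m).map (gA n hn)) *
      (csA n).wordProd ((wordU l m).map (gA n hn)) = 1 := by
  set cs := csA n with hcs
  set g := gA n hn with hg
  set sl := cs.simple (g l) with hsl
  set sm := cs.simple (g m) with hsmdef
  set sm1 := cs.simple (g (m-1)) with hsm1def
  set a := cs.wordProd ((List.range' (l+1) (m - l - 2)).map g) with hadef
  have hCa : Commute sm a := by
    apply commute_wordProd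
    intro j hj
    rw [List.mem_map] at hj
    obtain ⟨k, hk, rfl⟩ := hj
    rw [List.mem_range'_1] at hk
    exact comm_of_two cs (M_two hn (by omega) (by omega) (by omega) hm (by omega))
  have hCl : Commute sm sl :=
    comm_of_two cs (M_two hn (by omega) (by omega) (by omega) hm (by omega))
  have cm_a := swap_assoc hCa.eq
  have cm_a' := swap_assoc hCa.inv_right.eq
  have cm_l := swap_assoc hCl.eq
  have br : ∀ x, sm1 * (sm * (sm1 * x)) = sm * (sm1 * (sm * x)) :=
    braid_assoc (braid_of_three cs (M_three hn (by omega) (by omega) (by omega) (by omega) hm))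
  have h3 : (sm * sm1) ^ 3 = 1 := by
    have := cs.simple_mul_simple_pow (g m) (g (m-1))
    rwa [M_three hn (by omega) (by omega) (by omega) hm (by omega)] at this
  have hP : cs.wordProd ((wordU l m).map g) =
      sm * (sm1 * (a⁻¹ * (sl * (a * (sm1 * (sm * sm1)))))) := by
    rw [wordU, hsplitD hlm, hsplitA hlm]
    simp only [List.map_append, List.map_reverse, List.map_cons, List.map_nil,
      CoxeterSystem.wordProd_append, CoxeterSystem.wordProd_reverse,
      CoxeterSystem.wordProd_cons, CoxeterSystem.wordProd_nil, mul_one,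
      mul_inv_rev, CoxeterSystem.inv_simple, mul_assoc]
    rfl
  rw [hP]
  simp only [mul_assoc]
  rw [br, cs.simple_mul_simple_cancel_left, cs.simple_mul_simple_cancel_left,
    cm_a', cm_l, cm_a, mul_inv_cancel_left, cs.simple_mul_simple_cancel_left,
    inv_mul_cancel_left]
  rw [show sm * (sm1 * (sm * (sm1 * (sm * sm1)))) = (sm * sm1) ^ 3 by rw [pow_succ, pow_succ, pow_one]; simp only [mul_assoc]]
  exact h3

lemma invV {n : ℕ} (hn : 1 ≤ n) {l m : ℕ} (hl : 1 ≤ l) (hlm : l + 2 ≤ m) (hm : m ≤ n) :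
    (csA n).wordProd ((wordV l m).map (gA n hn)) *
      (csA n).wordProd ((wordV l m).map (gA n hn)) = 1 := by
  set cs := csA n with hcs
  set g := gA n hn with hg
  set sl := cs.simple (g l) with hsl
  set sl1 := cs.simple (g (l+1)) with hsl1
  set sm := cs.simple (g m) with hsmdef
  set b := cs.wordProd ((List.range' (l+2) (m - l - 2)).map g) with hbdef
  have hCb : Commute sl b := by
    apply commute_wordProd
    intro j hj
    rw [List.mem_map] at hj
    obtain ⟨k, hk, rfl⟩ := hj
    rw [List.mem_range'_1] at hk
    exact comm_of_two cs (M_two hn (by omega) (by omega) (by omega) (by omega) (by omega))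
  have hCm : Commute sl sm :=
    comm_of_two cs (M_two hn (by omega) (by omega) (by omega) (by omega) hm)
  have cm_b := swap_assoc hCb.eq
  have cm_b' := swap_assoc hCb.inv_right.eq
  have cm_m := swap_assoc hCm.eq
  have br : ∀ x, sl * (sl1 * (sl * x)) = sl1 * (sl * (sl1 * x)) :=
    braid_assoc (braid_of_three cs (M_three hn (by omega) (by omega) (by omega) (by omega) (by omega)))
  have h3 : (sl * sl1) ^ 3 = 1 := by
    have := cs.simple_mul_simple_pow (g l) (g (l+1))
    rwa [M_three hn (by omega) (by omega) (by omega) (by omega) (by omega)] at this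
  have hP : cs.wordProd ((wordV l m).map g) =
      sl * (sl1 * (b * (sm * (b⁻¹ * (sl1 * (sl * sl1)))))) := by
    rw [wordV, hsplitM hlm, hsplitR hlm]
    simp only [List.map_append, List.map_reverse, List.map_cons, List.map_nil,
      CoxeterSystem.wordProd_append, CoxeterSystem.wordProd_reverse,
      CoxeterSystem.wordProd_cons, CoxeterSystem.wordProd_nil, mul_one,
      mul_inv_rev, CoxeterSystem.inv_simple, mul_assoc]
    rfl
  rw [hP]
  simp only [mul_assoc]
  rw [br, cs.simple_mul_simple_cancel_left, cs.simple_mul_simple_cancel_left,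
    cm_b, inv_mul_cancel_left, cm_m, cs.simple_mul_simple_cancel_left,
    cm_b', mul_inv_cancel_left]
  rw [show sl * (sl1 * (sl * (sl1 * (sl * sl1)))) = (sl * sl1) ^ 3 by
    rw [pow_succ, pow_succ, pow_one]; simp only [mul_assoc]]
  exact h3

lemma wordU_ne_reverse {l m : ℕ} (hl : 1 ≤ l) (hlm : l + 2 ≤ m) :
    wordU l m ≠ (wordU l m).reverse := by
  have h1 : (wordU l m).head? = some m := by
    rw [wordU, hsplitM hlm]
    simp
  have h2 : (wordU l m).reverse.head? = some (m-1) := by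
    rw [wordU, List.reverse_append]
    simp
  intro hEq
  rw [← hEq, h1] at h2
  have : m = m - 1 := Option.some_injective _ h2
  omega

lemma wordV_ne_reverse {l m : ℕ} (hl : 1 ≤ l) (hlm : l + 2 ≤ m) :
    wordV l m ≠ (wordV l m).reverse := by
  have h1 : (wordV l m).head? = some l := by
    rw [wordV, hsplitD hlm]
    simp
  have h2 : (wordV l m).reverse.head? = some (l+1) := by
    rw [wordV, List.reverse_append]
    simp
  intro hEq
  rw [← hEq, h1] at h2
  have : l = l + 1 := Option.some_injective _ h2
  omega

lemma map_gA_map_f {n : ℕ} (hn : 1 ≤ n) (w : List ℕ) (hw : ∀ k ∈ w, 1 ≤ k ∧ k ≤ n) :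
    (w.map (gA n hn)).map (fun i : Fin n => (i : ℕ) + 1) = w := by
  rw [List.map_map]
  conv_rhs => rw [← List.map_id w]
  apply List.map_congr_left
  intro k hk
  obtain ⟨h1, h2⟩ := hw k hk
  simp only [Function.comp_apply, id_eq]
  rw [gA_coe hn h1 h2]
  omega

lemma bind_coe_eq_map {n : ℕ} (ω : List (Fin n)) :
    (do let a ← ω; pure ((a : Fin n) : ℕ)) = ω.map (fun i : Fin n => (i : ℕ)) := by
  rw [List.bind_eq_flatMap]
  induction ω with
  | nil => rfl
  | cons a t ih =>
      simp only [List.pure_def] at ih ⊢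
      simp [List.flatMap_cons, ih]

lemma not_infix_of_inv {n : ℕ} (hn : 1 ≤ n) (w : List ℕ) (hw : ∀ k ∈ w, 1 ≤ k ∧ k ≤ n)
    (hinv : (csA n).wordProd (w.map (gA n hn)) * (csA n).wordProd (w.map (gA n hn)) = 1)
    (hne : w ≠ w.reverse)
    (ω : List (Fin n)) (h : IsULGA n ω) :
    ¬ w <:+: ω.map (fun i : Fin n => (i : ℕ) + 1) := by
  intro hinf
  obtain ⟨x, y, hxy⟩ := hinf
  have hxy' : ω.map (fun i : Fin n => (i : ℕ) + 1) = x ++ (w ++ y) := by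
    rw [← hxy, List.append_assoc]
  rw [List.map_eq_append_iff] at hxy'
  obtain ⟨x', r, hω1, hx', hr⟩ := hxy'
  rw [List.map_eq_append_iff] at hr
  obtain ⟨w', y', hr1, hw', hy'⟩ := hr
  have hinj : Function.Injective (fun i : Fin n => (i : ℕ) + 1) := by
    intro i j hij
    exact Fin.ext (by simpa using hij)
  have hw'' : w' = w.map (gA n hn) := by
    apply List.map_injective_iff.mpr hinj
    rw [hw', map_gA_map_f hn w hw]
  subst hr1 hω1
  have hinvw : ((csA n).wordProd w')⁻¹ = (csA n).wordProd w' := by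
    rw [hw'']
    exact (eq_inv_of_mul_eq_one_left hinv).symm
  have hprod : (csA n).wordProd (x' ++ (w'.reverse ++ y')) = (csA n).wordProd (x' ++ (w' ++ y')) := by
    simp only [CoxeterSystem.wordProd_append, CoxeterSystem.wordProd_reverse, hinvw]
  have hred : (csA n).IsReduced (x' ++ (w'.reverse ++ y')) := by
    rw [CoxeterSystem.IsReduced, hprod]
    have hlen : (x' ++ (w'.reverse ++ y')).length = (x' ++ (w' ++ y')).length := by
      simp
    rw [hlen]
    exact h.1
  have heq := h.2 (x' ++ (w'.reverse ++ y')) hred hprod (by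
    intro i
    simp [List.count_append])
  have hrev : w'.reverse = w' :=
    List.append_cancel_right (List.append_cancel_left heq)
  apply hne
  have := congrArg (List.map (fun i : Fin n => (i : ℕ) + 1)) hrev
  rw [List.map_reverse, hw'] at this
  exact this.symm

end ForbiddenAux

open ForbiddenAux

theorem forbidden_subwords_of_ulg_in_type_A (n : ℕ) (hn : 1 ≤ n)
    (l m : ℕ) (hl : 1 ≤ l) (hlm : l + 2 ≤ m) (hm : m ≤ n)
    (ω : List (Fin n)) (h : IsULGA n ω) :
    ¬ wordU l m <:+: ω.map (fun i => (i : ℕ) + 1) ∧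
    ¬ (wordU l m).reverse <:+: ω.map (fun i => (i : ℕ) + 1) ∧
    ¬ wordV l m <:+: ω.map (fun i => (i : ℕ) + 1) ∧
    ¬ (wordV l m).reverse <:+: ω.map (fun i => (i : ℕ) + 1) := by
  have hwU : ∀ k ∈ wordU l m, 1 ≤ k ∧ k ≤ n := by
    intro k hk
    rw [wordU] at hk
    simp only [List.mem_append, List.mem_reverse, List.mem_range'_1, List.mem_singleton] at hk
    omega
  have hwV : ∀ k ∈ wordV l m, 1 ≤ k ∧ k ≤ n := by
    intro k hk
    rw [wordV] at hk
    simp only [List.mem_append, List.mem_reverse, List.mem_range'_1, List.mem_singleton] at hk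
    omega
  have hinvU := invU hn hl hlm hm
  have hinvV := invV hn hl hlm hm
  have hinvU' : (csA n).wordProd (((wordU l m).reverse).map (gA n hn)) *
      (csA n).wordProd (((wordU l m).reverse).map (gA n hn)) = 1 := by
    rw [List.map_reverse, CoxeterSystem.wordProd_reverse, ← mul_inv_rev, hinvU, inv_one]
  have hinvV' : (csA n).wordProd (((wordV l m).reverse).map (gA n hn)) *
      (csA n).wordProd (((wordV l m).reverse).map (gA n hn)) = 1 := by
    rw [List.map_reverse, CoxeterSystem.wordProd_reverse, ← mul_inv_rev, hinvV, inv_one]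
  have hco := bind_coe_eq_map ω
  refine ⟨?_, ?_, ?_, ?_⟩ <;> rw [hco, List.map_map]
  · simpa [Function.comp_def] using not_infix_of_inv hn _ hwU hinvU (wordU_ne_reverse hl hlm) ω h
  · have := not_infix_of_inv hn _ (fun k hk => hwU k (List.mem_reverse.mp hk)) hinvU'
      (by rw [List.reverse_reverse]; exact fun hh => wordU_ne_reverse hl hlm hh.symm) ω h
    simpa [Function.comp_def] using this
  · simpa [Function.comp_def] using not_infix_of_inv hn _ hwV hinvV (wordV_ne_reverse hl hlm) ω h
  · have := not_infix_of_inv hn _ (fun k hk => hwV k (List.mem_reverse.mp hk)) hinvV'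
      (by rw [List.reverse_reverse]; exact fun hh => wordV_ne_reverse hl hlm hh.symm) ω h
    simpa [Function.comp_def] using this
end

section
/- If omega is a uniquely labelled geodesic in the simply-laced Coxeter group associated to Gamma, then the set of vertices of Gamma occurring in omega induces a connected subgraph of Gamma (or is empty). -/
open CoxeterSystem

/-- The simply-laced Coxeter matrix associated to a simple graph `G`:
`m(α,α) = 1`, `m(α,β) = 3` if `α` and `β` are adjacent, and `m(α,β) = 2` otherwise. -/
def graphCoxeterMatrix {V : Type*} [DecidableEq V] (G : SimpleGraph V) [DecidableRel G.Adj] :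
    CoxeterMatrix V where
  M := Matrix.of fun i j => if i = j then 1 else if G.Adj i j then 3 else 2
  isSymm := by
    ext i j
    simp only [Matrix.transpose_apply, Matrix.of_apply, G.adj_comm]
    rcases eq_or_ne i j with h | h
    · simp [h]
    · simp [h, h.symm]
  diagonal := by simp
  off_diagonal := by
    intro i j h
    simp only [Matrix.of_apply, h, if_false]
    split <;> simp

/-- The Coxeter system of the simply-laced Coxeter group associated to `G`. -/
noncomputable def csG {V : Type*} [DecidableEq V] (G : SimpleGraph V) [DecidableRel G.Adj] :
    CoxeterSystem (graphCoxeterMatrix G) (graphCoxeterMatrix G).Group :=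
  (graphCoxeterMatrix G).toCoxeterSystem

/-- A word `ω` is a uniquely labelled geodesic (u.l.g.) if it is reduced and every
reduced word with the same product and the same label equals `ω`. -/
def IsULGG {V : Type*} [DecidableEq V] (G : SimpleGraph V) [DecidableRel G.Adj]
    (ω : List V) : Prop :=
  (csG G).IsReduced ω ∧
    ∀ ω' : List V, (csG G).IsReduced ω' →
      (csG G).wordProd ω' = (csG G).wordProd ω →
      (∀ v : V, ω'.count v = ω.count v) → ω' = ω

/-- `k` is a turning position of the word `ω` if `0 < k < ω.length - 1` and the
letters of `ω` at positions `k - 1` and `k + 1` coincide. -/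
def IsTurning {V : Type*} (ω : List V) (k : ℕ) : Prop :=
  0 < k ∧ k + 1 < ω.length ∧ ω[k - 1]? = ω[k + 1]?

/-- A turning position `k` of `ω` is short if the letter of `ω` at position `k - 1`
is a branching vertex of `G`, i.e. a vertex of degree at least `3`. -/
def IsShortTurning {V : Type*} [Fintype V] [DecidableEq V] (G : SimpleGraph V)
    [DecidableRel G.Adj] (ω : List V) (k : ℕ) : Prop :=
  IsTurning ω k ∧ ∃ v : V, ω[k - 1]? = some v ∧ 3 ≤ G.degree v

/-- The branching index of a word `ω`: the number of its short turning positions. -/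
noncomputable def branchingIndex {V : Type*} [Fintype V] [DecidableEq V] (G : SimpleGraph V)
    [DecidableRel G.Adj] (ω : List V) : ℕ :=
  Set.ncard {k : ℕ | IsShortTurning G ω k}


private lemma swap_wordProd' {B : Type*} {M : CoxeterMatrix B} {W : Type*} [Group W]
    (cs : CoxeterSystem M W) (l1 l2 : List B) (a b : B)
    (hc : cs.simple a * cs.simple b = cs.simple b * cs.simple a) :
    cs.wordProd (l1 ++ b :: a :: l2) = cs.wordProd (l1 ++ a :: b :: l2) := by
  rw [wordProd_append, wordProd_append, wordProd_cons, wordProd_cons, wordProd_cons,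
    wordProd_cons]
  rw [← mul_assoc (cs.simple b), ← hc, mul_assoc]

private lemma list_decomp {B : Type*} (ω : List B) (i : ℕ) (h0 : 0 < i) (hi : i < ω.length) :
    ω = ω.take (i-1) ++ ω[i-1] :: ω[i] :: ω.drop (i+1) := by
  conv_lhs => rw [← List.take_append_drop (i-1) ω]
  congr 1
  rw [List.drop_eq_getElem_cons (show i-1 < ω.length by omega)]
  congr 1
  have h : i - 1 + 1 = i := by omega
  rw [h, List.drop_eq_getElem_cons hi]

theorem support_of_ulg_is_connected
    {V : Type*} [DecidableEq V] (G : SimpleGraph V) [DecidableRel G.Adj]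
    (ω : List V) (h : IsULGG G ω) :
    {v : V | v ∈ ω} = ∅ ∨ (G.induce {v : V | v ∈ ω}).Connected := by
  classical
  by_cases hω : {v : V | v ∈ ω} = ∅
  · exact Or.inl hω
  right
  have hne : ω ≠ [] := by rintro rfl; simp at hω
  have h0 : 0 < ω.length := List.length_pos_iff.mpr hne
  set S := {v : V | v ∈ ω} with hS
  have hmemS : ∀ {i : ℕ} (hi : i < ω.length), ω[i] ∈ S := by
    intro i hi; exact List.getElem_mem hi
  have key : ∀ i (hi : i < ω.length),
      (G.induce S).Reachable ⟨ω[0], hmemS h0⟩ ⟨ω[i], hmemS hi⟩ := by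
    intro i
    induction i with
    | zero => intro _; exact SimpleGraph.Reachable.refl _
    | succ n ih =>
      intro hi
      have hn' : n < ω.length := by omega
      have hn := ih hn'
      by_cases hab : ω[n] = ω[n+1]
      · convert hn using 2
        exact hab.symm
      by_cases hadj : G.Adj ω[n] ω[n+1]
      · refine hn.trans (SimpleGraph.Adj.reachable ?_)
        exact hadj
      exfalso
      have hm : graphCoxeterMatrix G ω[n] ω[n+1] = 2 := by
        simp [graphCoxeterMatrix, hab, hadj]
      have hpow := (csG G).simple_mul_simple_pow ω[n] ω[n+1]
      rw [hm] at hpow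
      have hsq : ((csG G).simple ω[n] * (csG G).simple ω[n+1]) *
          ((csG G).simple ω[n] * (csG G).simple ω[n+1]) = 1 := by
        rw [← sq]; exact hpow
      have hc : (csG G).simple ω[n] * (csG G).simple ω[n+1]
          = (csG G).simple ω[n+1] * (csG G).simple ω[n] := by
        have h1 : (csG G).simple ω[n] * (csG G).simple ω[n+1]
            = ((csG G).simple ω[n] * (csG G).simple ω[n+1])⁻¹ :=
          eq_inv_of_mul_eq_one_right hsq
        rw [h1, mul_inv_rev, inv_simple, inv_simple]
      set ω' := ω.take n ++ ω[n+1] :: ω[n] :: ω.drop (n+2) with hω'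
      have hdec : ω = ω.take n ++ ω[n] :: ω[n+1] :: ω.drop (n+2) := by
        have := list_decomp ω (n+1) (by omega) hi
        simp only [Nat.add_sub_cancel] at this; exact this
      have hprod : (csG G).wordProd ω' = (csG G).wordProd ω := by
        conv_rhs => rw [hdec]
        exact swap_wordProd' (csG G) _ _ _ _ hc
      have hperm : List.Perm ω' ω := by
        conv_rhs => rw [hdec]
        exact List.Perm.append_left _ (List.Perm.swap _ _ _)
      have hred : (csG G).IsReduced ω' := by
        have h1 := h.1
        unfold CoxeterSystem.IsReduced at h1 ⊢
        rw [hprod, hperm.length_eq, h1]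
      have heq : ω' = ω := h.2 ω' hred hprod (fun v => hperm.count_eq v)
      rw [hdec] at heq
      have h2 := List.append_cancel_left heq
      have h3 := List.head_eq_of_cons_eq h2
      exact hab h3.symm
  have hpre : (G.induce S).Preconnected := by
    intro u v
    obtain ⟨i, hi, hui⟩ := List.mem_iff_getElem.mp u.2
    obtain ⟨j, hj, hvj⟩ := List.mem_iff_getElem.mp v.2
    have hu : u = ⟨ω[i], hmemS hi⟩ := by ext; exact hui.symm
    have hv : v = ⟨ω[j], hmemS hj⟩ := by ext; exact hvj.symm
    rw [hu, hv]
    exact (key i hi).symm.trans (key j hj)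
  have : Nonempty S := ⟨⟨ω[0], hmemS h0⟩⟩
  exact SimpleGraph.Connected.mk hpre
end

section
/- If omega is a uniquely labelled geodesic of length at least 2 in the simply-laced Coxeter group associated to Gamma, then any two consecutive letters alpha, beta of omega are adjacent vertices of Gamma. In other words, a u.l.g. is a path (with possible returns) on the graph Gamma. -/
open CoxeterSystem

theorem consecutive_letters_of_ulg_are_adjacent
    {V : Type*} [DecidableEq V] (G : SimpleGraph V) [DecidableRel G.Adj]
    (ω : List V) (h : IsULGG G ω) (hlen : 2 ≤ ω.length)
    (u v : List V) (α β : V) (hω : ω = u ++ α :: β :: v) :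
    G.Adj α β := by
  obtain ⟨hred, huniq⟩ := h
  by_contra hadj
  rcases eq_or_ne α β with rfl | hne
  · -- α = β: word not reduced
    have : (csG G).wordProd ω = (csG G).wordProd (u ++ v) := by
      simp only [hω, wordProd_append, wordProd_cons, ← mul_assoc,
        simple_mul_simple_cancel_right]
    have h1 := (csG G).length_wordProd_le (u ++ v)
    rw [← this, hred, hω] at h1
    simp at h1
  · -- α ≠ β, not adjacent: simples commute
    have hM : (graphCoxeterMatrix G).M α β = 2 := by
      simp [graphCoxeterMatrix, hne, hadj]
    have hcomm : (csG G).simple α * (csG G).simple β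
        = (csG G).simple β * (csG G).simple α := by
      have := (csG G).simple_mul_simple_pow α β
      rw [hM, pow_two] at this
      calc (csG G).simple α * (csG G).simple β
          = ((csG G).simple α * (csG G).simple β)⁻¹ := eq_inv_of_mul_eq_one_left this
        _ = (csG G).simple β * (csG G).simple α := by
            rw [mul_inv_rev, inv_simple, inv_simple]
    set ω' := u ++ β :: α :: v with hω'
    have hprod : (csG G).wordProd ω' = (csG G).wordProd ω := by
      simp only [hω, hω', wordProd_append, wordProd_cons, ← mul_assoc, hcomm]
    have hred' : (csG G).IsReduced ω' := by
      unfold CoxeterSystem.IsReduced at hred ⊢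
      rw [hprod, hred, hω, hω']; simp
    have hcount : ∀ x : V, ω'.count x = ω.count x := by
      intro x
      simp only [hω, hω', List.count_append, List.count_cons]
      ring
    have := huniq ω' hred' hprod hcount
    rw [hω, hω'] at this
    have := List.append_inj_right this rfl
    simp at this
    exact hne this.1.symm
end

section
/- Let alpha and beta be adjacent vertices of Gamma and let v be a word each of whose letters is either equal to alpha or not adjacent to alpha in Gamma. Then neither the word alpha beta v beta alpha beta nor the word beta alpha beta v beta alpha occurs as a contiguous (infix) subword of a uniquely labelled geodesic in the simply-laced Coxeter group associated to Gamma. -/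
open CoxeterSystem

section Aux

variable {V : Type*} [DecidableEq V] (G : SimpleGraph V) [DecidableRel G.Adj]

lemma graphM_adj {α β : V} (h : G.Adj α β) : (graphCoxeterMatrix G).M α β = 3 := by
  simp [graphCoxeterMatrix, h.ne, h]

lemma graphM_nadj {α β : V} (hne : α ≠ β) (h : ¬ G.Adj α β) :
    (graphCoxeterMatrix G).M α β = 2 := by
  simp [graphCoxeterMatrix, hne, h]

lemma simple_comm_of_nadj {α x : V} (hne : α ≠ x) (h : ¬ G.Adj α x) :
    Commute ((csG G).simple α) ((csG G).simple x) := by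
  have h2 := (csG G).simple_mul_simple_pow α x
  rw [graphM_nadj G hne h, pow_two] at h2
  have e : ((csG G).simple α * (csG G).simple x)⁻¹ = (csG G).simple α * (csG G).simple x :=
    (eq_inv_of_mul_eq_one_left h2).symm
  simp only [mul_inv_rev, (csG G).inv_simple] at e
  exact e.symm

lemma braid_of_adj {α β : V} (h : G.Adj α β) :
    (csG G).simple α * (csG G).simple β * (csG G).simple α
      = (csG G).simple β * (csG G).simple α * (csG G).simple β := by
  have h2 := (csG G).simple_mul_simple_pow α β
  rw [graphM_adj G h] at h2
  have h3 : ((csG G).simple α * (csG G).simple β * (csG G).simple α)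
      * ((csG G).simple β * (csG G).simple α * (csG G).simple β) = 1 := by
    rw [← h2, pow_succ, pow_two]; group
  have h4 := eq_inv_of_mul_eq_one_left h3
  simp only [mul_inv_rev, (csG G).inv_simple] at h4
  rw [h4]; group

lemma simple_comm_wordProd (α : V) (v : List V) (hv : ∀ x ∈ v, x = α ∨ ¬ G.Adj α x) :
    Commute ((csG G).simple α) ((csG G).wordProd v) := by
  induction v with
  | nil => simp [Commute.one_right]
  | cons x t ih =>
    rw [(csG G).wordProd_cons]
    refine Commute.mul_right ?_ (ih fun y hy => hv y (List.mem_cons_of_mem x hy))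
    rcases hv x List.mem_cons_self with rfl | hnx
    · exact Commute.refl _
    · rcases eq_or_ne α x with rfl | hne
      · exact Commute.refl _
      · exact simple_comm_of_nadj G hne hnx

lemma key_prod_eq {α β : V} (h : G.Adj α β) (v : List V)
    (hv : ∀ x ∈ v, x = α ∨ ¬ G.Adj α x) :
    (csG G).wordProd ([α, β] ++ v ++ [β, α, β]) = (csG G).wordProd ([β, α, β] ++ v ++ [β, α]) := by
  have hc := simple_comm_wordProd G α v hv
  have hb := braid_of_adj G h
  simp only [(csG G).wordProd_append, (csG G).wordProd_cons, (csG G).wordProd_nil, mul_one]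
  set a := (csG G).simple α
  set b := (csG G).simple β
  set p := (csG G).wordProd v
  have hb2 : b * (a * b) = a * (b * a) := by rw [← mul_assoc, ← hb, mul_assoc]
  have hpa : p * a = a * p := hc.eq.symm
  simp only [← mul_assoc]
  calc a * b * p * b * a * b = a * b * p * (b * (a * b)) := by group
    _ = a * b * p * (a * (b * a)) := by rw [hb2]
    _ = a * b * ((p * a) * (b * a)) := by group
    _ = a * b * ((a * p) * (b * a)) := by rw [hpa]
    _ = (a * b * a) * (p * (b * a)) := by group
    _ = (b * a * b) * (p * (b * a)) := by rw [hb]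
    _ = b * a * b * p * b * a := by group

end Aux

lemma not_infix_of_swap {V : Type*} [DecidableEq V] (G : SimpleGraph V) [DecidableRel G.Adj]
    (w₁ w₂ : List V) (hprod : (csG G).wordProd w₁ = (csG G).wordProd w₂)
    (hlen : w₁.length = w₂.length) (hcount : ∀ x : V, w₁.count x = w₂.count x)
    (hne : w₂ ≠ w₁)
    (ω : List V) (h : IsULGG G ω) : ¬ w₁ <:+: ω := by
  rintro ⟨x, y, rfl⟩
  obtain ⟨hred, huniq⟩ := h
  apply hne
  have hp : (csG G).wordProd (x ++ w₂ ++ y) = (csG G).wordProd (x ++ w₁ ++ y) := by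
    simp only [(csG G).wordProd_append, hprod]
  have hl : (x ++ w₂ ++ y).length = (x ++ w₁ ++ y).length := by
    simp [hlen]
  have hred' : (csG G).IsReduced (x ++ w₂ ++ y) := by
    unfold CoxeterSystem.IsReduced at hred ⊢
    rw [hp, hred, hl]
  have hcnt : ∀ t : V, (x ++ w₂ ++ y).count t = (x ++ w₁ ++ y).count t := by
    intro t; simp [List.count_append, hcount t]
  have heq := huniq _ hred' hp hcnt
  have h1 : x ++ (w₂ ++ y) = x ++ (w₁ ++ y) := by simpa [List.append_assoc] using heq
  have h2 := List.append_cancel_left h1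
  exact List.append_cancel_right h2


theorem forbidden_subwords_of_ulg_simply_laced
    {V : Type*} [DecidableEq V] (G : SimpleGraph V) [DecidableRel G.Adj]
    (α β : V) (hadj : G.Adj α β) (v : List V)
    (hv : ∀ x ∈ v, x = α ∨ ¬ G.Adj α x)
    (ω : List V) (h : IsULGG G ω) :
    ¬ ([α, β] ++ v ++ [β, α, β]) <:+: ω ∧ ¬ ([β, α, β] ++ v ++ [β, α]) <:+: ω := by
  have hne : α ≠ β := hadj.ne
  have hprod := key_prod_eq G hadj v hv
  have hlen : ([α, β] ++ v ++ [β, α, β]).length = ([β, α, β] ++ v ++ [β, α]).length := by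
    simp
  have hcount : ∀ x : V, ([α, β] ++ v ++ [β, α, β]).count x = ([β, α, β] ++ v ++ [β, α]).count x := by
    intro x; simp [List.count_append, List.count_cons]; omega
  have hne' : ([β, α, β] ++ v ++ [β, α]) ≠ ([α, β] ++ v ++ [β, α, β]) := by
    intro hEq
    have : β = α := by
      have := congrArg (List.head?) hEq
      simpa using this
    exact hne this.symm
  constructor
  · exact not_infix_of_swap G _ _ hprod hlen hcount hne' ω h
  · exact not_infix_of_swap G _ _ hprod.symm hlen.symm (fun x => (hcount x).symm)
      (Ne.symm hne') ω h
end
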